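/- arXiv:1308.5349 — 3 statements merged into one kernel-verified Lean document; each statement's English description precedes it below -/
import Mathlib

section
/- For any two locally integrable functions f and g on the real line and any dyadic interval I, the Haar coefficient of the product satisfies: ⟨fg, h_I⟩ = Σ_{J ⊊ I} ⟨f,h_J⟩⟨g,h_J⟩ δ(J,I)/√|I| + ⟨f,h_I⟩·(avg of g over I) + ⟨g,h_I⟩·(avg of f over I), where δ(J,I)=1 if J ⊆ I₋ (left half of I) and δ(J,I)=-1 if J ⊆ I₊ (right half of I), and h_I = |I|^{-1/2}(1_{I₋} - 1_{I₊}) is the L²-normalized Haar function. -/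
/-!
Write `Cov_I(f, g) = ∫_I fg - |I| ⟨f⟩_I ⟨g⟩_I`. Splitting `I` into its halves gives the
Pythagoras identity `Cov_I(f, f) = ⟨f, h_I⟩² + Cov_{I₋}(f, f) + Cov_{I₊}(f, f)`. Iterating it, what
is left after `m` generations is the sum of `Cov_J(f, f)` over the `2^m` descendants `J` of `I`,
and this tends to `0` because `f` is `L²`-close to a uniformly continuous function, whose
oscillation on small intervals is small. This is the local Parseval identity
`Σ_{J ⊆ I} ⟨f, h_J⟩² = Cov_I(f, f)`, which polarizes to `Σ_{J ⊆ I} ⟨f, h_J⟩⟨g, h_J⟩ = Cov_I(f, g)`.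
Applying it to `I₋` and `I₊` and subtracting gives the sum with the signs `δ(J, I)`, and
`(Cov_{I₋}(f, g) - Cov_{I₊}(f, g)) / √|I| = ⟨fg, h_I⟩ - ⟨f, h_I⟩⟨g⟩_I - ⟨g, h_I⟩⟨f⟩_I` is algebra.
-/

open MeasureTheory Set
open scoped ENNReal

noncomputable section

/-- The dyadic interval `[k·2^n, (k+1)·2^n)` encoded by the pair `p = (n, k)`. -/
def dyad (p : ℤ × ℤ) : Set ℝ := Set.Ico ((p.2 : ℝ) * 2 ^ p.1) (((p.2 : ℝ) + 1) * 2 ^ p.1)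

/-- Left half of a dyadic interval. -/
def dLeft (p : ℤ × ℤ) : ℤ × ℤ := (p.1 - 1, 2 * p.2)

/-- Right half of a dyadic interval. -/
def dRight (p : ℤ × ℤ) : ℤ × ℤ := (p.1 - 1, 2 * p.2 + 1)

/-- Dyadic parent. -/
def dParent (p : ℤ × ℤ) : ℤ × ℤ := (p.1 + 1, Int.fdiv p.2 2)

/-- Length of the dyadic interval. -/
def dLen (p : ℤ × ℤ) : ℝ := 2 ^ p.1

/-- The L²-normalized Haar function `h_I = |I|^{-1/2}(1_{I₋} - 1_{I₊})`. -/
def haarF (p : ℤ × ℤ) : ℝ → ℝ := fun x =>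
  (Real.sqrt (dLen p))⁻¹ *
    ((dyad (dLeft p)).indicator (fun _ => (1 : ℝ)) x -
      (dyad (dRight p)).indicator (fun _ => (1 : ℝ)) x)

/-- The averaging function `h_I^1 = |I|^{-1} 1_I`. -/
def haarAvg (p : ℤ × ℤ) : ℝ → ℝ := fun x =>
  (dLen p)⁻¹ * (dyad p).indicator (fun _ => (1 : ℝ)) x

/-- Haar coefficient `⟨f, h_I⟩`. -/
def hc (f : ℝ → ℝ) (p : ℤ × ℤ) : ℝ := ∫ x, f x * haarF p x

/-- Average `⟨f⟩_I = |I|⁻¹ ∫_I f`. -/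
def avg (f : ℝ → ℝ) (p : ℤ × ℤ) : ℝ := (dLen p)⁻¹ * ∫ x in dyad p, f x

open Classical in
/-- `δ(J, I) = 1` if `J ⊆ I₋` and `-1` otherwise (in particular if `J ⊆ I₊`). -/
def dsgn (q p : ℤ × ℤ) : ℝ := if dyad q ⊆ dyad (dLeft p) then 1 else -1

/-- `𝔰(J) = √2 · Σ_{K : K₋ ⊋ J} |K|⁻¹`. -/
def sfrak (p : ℤ × ℤ) : ℝ :=
  Real.sqrt 2 * ∑' q : {q : ℤ × ℤ // dyad p ⊂ dyad (dLeft q)}, (dLen q.1)⁻¹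

open Filter Topology

theorem hasSum_of_nonneg_of_tendsto_sum_monotone {ι : Type*} {F : ι → ℝ} (hF : ∀ i, 0 ≤ F i)
    {T : ℕ → Finset ι} (hT : Monotone T) (hcover : ∀ i, ∃ n, i ∈ T n) {a : ℝ}
    (h : Tendsto (fun n => ∑ i ∈ T n, F i) atTop (𝓝 a)) : HasSum F a := by
  have hT' := tendsto_atTop_finset_of_monotone hT hcover
  have hmono : Monotone fun n => ∑ i ∈ T n, F i := fun m n hmn =>
    Finset.sum_le_sum_of_subset_of_nonneg (hT hmn) fun i _ _ => hF i
  have hsum : Summable F := summable_of_sum_le hF fun s => by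
    obtain ⟨n, hn⟩ := (tendsto_atTop.1 hT' s).exists
    exact (Finset.sum_le_sum_of_subset_of_nonneg hn fun i _ _ => hF i).trans
      (hmono.ge_of_tendsto h n)
  rw [← tendsto_nhds_unique (hsum.hasSum.comp hT') h]
  exact hsum.hasSum

namespace DyadicHaar

lemma dLen_pos (p : ℤ × ℤ) : 0 < dLen p := zpow_pos two_pos _

lemma dLen_dLeft (p : ℤ × ℤ) : dLen (dLeft p) = dLen p / 2 := by
  rw [dLen, dLen, dLeft, zpow_sub_one₀ two_ne_zero, div_eq_mul_inv]

lemma dLen_dRight (p : ℤ × ℤ) : dLen (dRight p) = dLen p / 2 := dLen_dLeft p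

lemma dyad_eq_Ico (p : ℤ × ℤ) : dyad p = Ico (p.2 * dLen p) ((p.2 + 1) * dLen p) := rfl

lemma dyad_dLeft (p : ℤ × ℤ) : dyad (dLeft p) = Ico (p.2 * dLen p) ((p.2 + 1 / 2) * dLen p) := by
  rw [dyad_eq_Ico, dLen_dLeft, dLeft]
  push_cast
  congr 1 <;> ring

lemma dyad_dRight (p : ℤ × ℤ) :
    dyad (dRight p) = Ico ((p.2 + 1 / 2) * dLen p) ((p.2 + 1) * dLen p) := by
  rw [dyad_eq_Ico, dLen_dRight, dRight]
  push_cast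
  congr 1 <;> ring

lemma dyad_dLeft_union_dyad_dRight (p : ℤ × ℤ) : dyad (dLeft p) ∪ dyad (dRight p) = dyad p := by
  have := dLen_pos p
  rw [dyad_dLeft, dyad_dRight, dyad_eq_Ico]
  exact Ico_union_Ico_eq_Ico (by gcongr; norm_num) (by gcongr; norm_num)

lemma disjoint_dyad_dLeft_dyad_dRight (p : ℤ × ℤ) :
    Disjoint (dyad (dLeft p)) (dyad (dRight p)) := by
  rw [dyad_dLeft, dyad_dRight]
  exact Ico_disjoint_Ico_same

lemma dyad_dLeft_subset (p : ℤ × ℤ) : dyad (dLeft p) ⊆ dyad p :=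
  dyad_dLeft_union_dyad_dRight p ▸ subset_union_left

lemma dyad_dRight_subset (p : ℤ × ℤ) : dyad (dRight p) ⊆ dyad p :=
  dyad_dLeft_union_dyad_dRight p ▸ subset_union_right

lemma measurableSet_dyad (p : ℤ × ℤ) : MeasurableSet (dyad p) := measurableSet_Ico

lemma left_mem_dyad (p : ℤ × ℤ) : (p.2 : ℝ) * dLen p ∈ dyad p := by
  have := dLen_pos p
  rw [dyad_eq_Ico]
  constructor <;> nlinarith

lemma abs_sub_lt_dLen {q : ℤ × ℤ} {x y : ℝ} (hx : x ∈ dyad q) (hy : y ∈ dyad q) :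
    |x - y| < dLen q := by
  rw [dyad_eq_Ico, mem_Ico, add_one_mul] at hx hy
  rw [abs_sub_lt_iff]
  constructor <;> linarith

lemma mem_dyad_iff_floor_eq {p : ℤ × ℤ} {x : ℝ} : x ∈ dyad p ↔ ⌊x / dLen p⌋ = p.2 := by
  rw [dyad_eq_Ico, mem_Ico, Int.floor_eq_iff, le_div_iff₀ (dLen_pos p), div_lt_iff₀ (dLen_pos p)]

-- `⌊x / 2 ^ N⌋ = ⌊x / 2 ^ n⌋ / 2 ^ (N - n)` in integer division for `n ≤ N`.
lemma dyad_subset_of_mem {q p : ℤ × ℤ} (hqp : q.1 ≤ p.1) {x : ℝ} (hq : x ∈ dyad q)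
    (hp : x ∈ dyad p) : dyad q ⊆ dyad p := by
  have hlen : dLen p = dLen q * ((2 ^ (p.1 - q.1).toNat : ℕ) : ℝ) := by
    rw [dLen, dLen, Nat.cast_pow, Nat.cast_ofNat, ← zpow_natCast, ← zpow_add₀ two_ne_zero,
      Int.toNat_of_nonneg (by omega)]
    ring_nf
  have hfloor : ∀ y, ⌊y / dLen p⌋ = ⌊y / dLen q⌋ / ((2 ^ (p.1 - q.1).toNat : ℕ) : ℤ) := fun y => by
    rw [hlen, ← div_div, Int.floor_div_natCast]
  intro y hy
  rw [mem_dyad_iff_floor_eq] at hq hp hy ⊢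
  rw [hfloor, hy, ← hq, ← hfloor, hp]

lemma scale_le_of_dyad_subset {q p : ℤ × ℤ} (h : dyad q ⊆ dyad p) : q.1 ≤ p.1 := by
  have hq := dLen_pos q
  rw [dyad_eq_Ico, dyad_eq_Ico, Ico_subset_Ico_iff (by nlinarith)] at h
  have : dLen q ≤ dLen p := by nlinarith
  exact (zpow_le_zpow_iff_right₀ one_lt_two).1 this

lemma eq_of_dyad_subset_of_scale_eq {q p : ℤ × ℤ} (h : dyad q ⊆ dyad p) (hqp : q.1 = p.1) :
    q = p := by
  have hp := mem_dyad_iff_floor_eq.1 (h (left_mem_dyad q))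
  have hq := mem_dyad_iff_floor_eq.1 (left_mem_dyad q)
  have hlen : dLen q = dLen p := by rw [dLen, dLen, hqp]
  rw [hlen] at hq hp
  exact Prod.ext hqp (hq.symm.trans hp)

lemma not_dyad_subset_dRight_of_dyad_subset_dLeft {q p : ℤ × ℤ}
    (hL : dyad q ⊆ dyad (dLeft p)) : ¬dyad q ⊆ dyad (dRight p) := fun hR =>
  (disjoint_dyad_dLeft_dyad_dRight p).notMem_of_mem_left (hL (left_mem_dyad q))
    (hR (left_mem_dyad q))

lemma dyad_ssubset_iff {q p : ℤ × ℤ} :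
    dyad q ⊂ dyad p ↔ dyad q ⊆ dyad (dLeft p) ∨ dyad q ⊆ dyad (dRight p) := by
  constructor
  · intro h
    have hlt : q.1 < p.1 := lt_of_le_of_ne (scale_le_of_dyad_subset h.subset)
      fun hqp => h.ne (congrArg dyad (eq_of_dyad_subset_of_scale_eq h.subset hqp))
    have hmem := h.subset (left_mem_dyad q)
    rw [← dyad_dLeft_union_dyad_dRight] at hmem
    rcases hmem with hmem | hmem
    · exact Or.inl (dyad_subset_of_mem (by simp only [dLeft]; omega) (left_mem_dyad q) hmem)
    · exact Or.inr (dyad_subset_of_mem (by simp only [dRight]; omega) (left_mem_dyad q) hmem)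
  · have hL : dyad (dLeft p) ⊂ dyad p := (dyad_dLeft_subset p).ssubset_of_mem_notMem
      (dyad_dRight_subset p (left_mem_dyad _))
      ((disjoint_dyad_dLeft_dyad_dRight p).notMem_of_mem_right (left_mem_dyad _))
    have hR : dyad (dRight p) ⊂ dyad p := (dyad_dRight_subset p).ssubset_of_mem_notMem
      (dyad_dLeft_subset p (left_mem_dyad _))
      ((disjoint_dyad_dLeft_dyad_dRight p).notMem_of_mem_left (left_mem_dyad _))
    rintro (h | h)
    exacts [h.trans_ssubset hL, h.trans_ssubset hR]

def descendants : ℕ → ℤ × ℤ → Finset (ℤ × ℤ)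
  | 0, p => {p}
  | m + 1, p => descendants m (dLeft p) ∪ descendants m (dRight p)

lemma descendants_zero (p : ℤ × ℤ) : descendants 0 p = {p} := rfl

lemma scale_of_mem_descendants {m : ℕ} {p q : ℤ × ℤ} (hq : q ∈ descendants m p) :
    q.1 = p.1 - m := by
  induction m generalizing p with
  | zero => simp_all [descendants]
  | succ m ih =>
    rcases Finset.mem_union.1 hq with hq | hq <;>
    · rw [ih hq]; simp only [dLeft, dRight]; push_cast; ring

lemma dyad_subset_of_mem_descendants {m : ℕ} {p q : ℤ × ℤ} (hq : q ∈ descendants m p) :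
    dyad q ⊆ dyad p := by
  induction m generalizing p with
  | zero => simp_all [descendants]
  | succ m ih =>
    rcases Finset.mem_union.1 hq with hq | hq
    exacts [(ih hq).trans (dyad_dLeft_subset p), (ih hq).trans (dyad_dRight_subset p)]

lemma mem_descendants_of_dyad_subset {m : ℕ} {p q : ℤ × ℤ} (hm : q.1 + m = p.1)
    (h : dyad q ⊆ dyad p) : q ∈ descendants m p := by
  induction m generalizing p with
  | zero => simp [descendants, eq_of_dyad_subset_of_scale_eq h (by omega)]
  | succ m ih =>
    have hss : dyad q ⊂ dyad p := h.ssubset_of_ne fun hqp =>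
      (scale_le_of_dyad_subset hqp.symm.subset).not_gt (by omega)
    rw [descendants, Finset.mem_union]
    rcases dyad_ssubset_iff.1 hss with h' | h'
    · exact Or.inl (ih (by simp only [dLeft]; omega) h')
    · exact Or.inr (ih (by simp only [dRight]; omega) h')

lemma disjoint_descendants_dLeft_dRight (m : ℕ) (p : ℤ × ℤ) :
    Disjoint (descendants m (dLeft p)) (descendants m (dRight p)) :=
  Finset.disjoint_left.2 fun _ hL hR => not_dyad_subset_dRight_of_dyad_subset_dLeft
    (dyad_subset_of_mem_descendants hL) (dyad_subset_of_mem_descendants hR)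

lemma sum_descendants_succ {M : Type*} [AddCommMonoid M] (F : ℤ × ℤ → M) (m : ℕ) (p : ℤ × ℤ) :
    ∑ q ∈ descendants (m + 1) p, F q =
      ∑ q ∈ descendants m (dLeft p), F q + ∑ q ∈ descendants m (dRight p), F q :=
  Finset.sum_union (disjoint_descendants_dLeft_dRight m p)

lemma dLen_of_mem_descendants {m : ℕ} {p q : ℤ × ℤ} (hq : q ∈ descendants m p) :
    dLen q = dLen p / 2 ^ m := by
  rw [dLen, dLen, scale_of_mem_descendants hq, zpow_sub₀ two_ne_zero, zpow_natCast]

lemma integrableOn_dyad {f : ℝ → ℝ} (hf : LocallyIntegrable f volume) (p : ℤ × ℤ) :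
    IntegrableOn f (dyad p) volume :=
  (hf.integrableOn_isCompact isCompact_Icc).mono_set Ico_subset_Icc_self

lemma setIntegral_dyad_eq_add {f : ℝ → ℝ} {p : ℤ × ℤ} (hf : IntegrableOn f (dyad p) volume) :
    ∫ x in dyad p, f x = (∫ x in dyad (dLeft p), f x) + ∫ x in dyad (dRight p), f x := by
  rw [← dyad_dLeft_union_dyad_dRight p] at hf ⊢
  exact setIntegral_union (disjoint_dyad_dLeft_dyad_dRight p) (measurableSet_dyad _)
    (hf.mono_set subset_union_left) (hf.mono_set subset_union_right)

lemma sum_descendants_setIntegral {f : ℝ → ℝ} (hf : LocallyIntegrable f volume) (m : ℕ)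
    (p : ℤ × ℤ) : ∑ q ∈ descendants m p, ∫ x in dyad q, f x = ∫ x in dyad p, f x := by
  induction m generalizing p with
  | zero => simp [descendants]
  | succ m ih =>
    rw [sum_descendants_succ, ih, ih, setIntegral_dyad_eq_add (integrableOn_dyad hf p)]

lemma setIntegral_dyad_eq_dLen_mul_avg (f : ℝ → ℝ) (p : ℤ × ℤ) :
    ∫ x in dyad p, f x = dLen p * avg f p := by
  rw [avg, mul_inv_cancel_left₀ (dLen_pos p).ne']

lemma setIntegral_dyad_const (c : ℝ) (p : ℤ × ℤ) : ∫ _ in dyad p, c = dLen p * c := by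
  have := dLen_pos p
  rw [setIntegral_const, smul_eq_mul, measureReal_def, dyad_eq_Ico, Real.volume_Ico,
    ENNReal.toReal_ofReal (by nlinarith)]
  ring

lemma avg_add {f g : ℝ → ℝ} {p : ℤ × ℤ} (hf : IntegrableOn f (dyad p) volume)
    (hg : IntegrableOn g (dyad p) volume) : avg (fun x => f x + g x) p = avg f p + avg g p := by
  rw [avg, avg, avg, integral_add hf hg, mul_add]

lemma avg_sub {f g : ℝ → ℝ} {p : ℤ × ℤ} (hf : IntegrableOn f (dyad p) volume)
    (hg : IntegrableOn g (dyad p) volume) : avg (fun x => f x - g x) p = avg f p - avg g p := by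
  rw [avg, avg, avg, integral_sub hf hg, mul_sub]

lemma hc_eq_setIntegral_sub {f : ℝ → ℝ} {p : ℤ × ℤ} (hf : IntegrableOn f (dyad p) volume) :
    hc f p = (√(dLen p))⁻¹ * ((∫ x in dyad (dLeft p), f x) - ∫ x in dyad (dRight p), f x) := by
  have hL := (hf.mono_set (dyad_dLeft_subset p)).integrable_indicator (measurableSet_dyad _)
  have hR := (hf.mono_set (dyad_dRight_subset p)).integrable_indicator (measurableSet_dyad _)
  have hmul : (fun x => f x * haarF p x) = fun x =>
      (√(dLen p))⁻¹ * ((dyad (dLeft p)).indicator f x - (dyad (dRight p)).indicator f x) := by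
    ext x
    simp only [haarF, indicator]
    split_ifs <;> ring
  rw [hc, hmul, integral_const_mul, integral_sub hL hR, integral_indicator (measurableSet_dyad _),
    integral_indicator (measurableSet_dyad _)]

lemma hc_add {f g : ℝ → ℝ} {p : ℤ × ℤ} (hf : IntegrableOn f (dyad p) volume)
    (hg : IntegrableOn g (dyad p) volume) : hc (fun x => f x + g x) p = hc f p + hc g p := by
  rw [hc_eq_setIntegral_sub (f := fun x => f x + g x) (hf.add hg), hc_eq_setIntegral_sub hf,
    hc_eq_setIntegral_sub hg,
    integral_add (hf.mono_set (dyad_dLeft_subset p)) (hg.mono_set (dyad_dLeft_subset p)),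
    integral_add (hf.mono_set (dyad_dRight_subset p)) (hg.mono_set (dyad_dRight_subset p))]
  ring

lemma hc_sub {f g : ℝ → ℝ} {p : ℤ × ℤ} (hf : IntegrableOn f (dyad p) volume)
    (hg : IntegrableOn g (dyad p) volume) : hc (fun x => f x - g x) p = hc f p - hc g p := by
  rw [hc_eq_setIntegral_sub (f := fun x => f x - g x) (hf.sub hg), hc_eq_setIntegral_sub hf,
    hc_eq_setIntegral_sub hg,
    integral_sub (hf.mono_set (dyad_dLeft_subset p)) (hg.mono_set (dyad_dLeft_subset p)),
    integral_sub (hf.mono_set (dyad_dRight_subset p)) (hg.mono_set (dyad_dRight_subset p))]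
  ring

def dyadicCov (f g : ℝ → ℝ) (p : ℤ × ℤ) : ℝ :=
  (∫ x in dyad p, f x * g x) - dLen p * (avg f p * avg g p)

section Variance

variable {f : ℝ → ℝ} {p : ℤ × ℤ}

lemma dyadicCov_self_eq (hf : IntegrableOn f (dyad p) volume)
    (hf2 : IntegrableOn (fun x => f x * f x) (dyad p) volume) (c : ℝ) :
    dyadicCov f f p = (∫ x in dyad p, (f x - c) ^ 2) - dLen p * (avg f p - c) ^ 2 := by
  have hexpand : ∫ x in dyad p, (f x - c) ^ 2 =
      (∫ x in dyad p, f x * f x) - 2 * c * (∫ x in dyad p, f x) + dLen p * c ^ 2 := by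
    rw [← integral_const_mul, ← integral_sub hf2 (hf.const_mul _), ← setIntegral_dyad_const,
      ← integral_add (f := fun x => f x * f x - 2 * c * f x) (hf2.sub (hf.const_mul _))
        (integrableOn_dyad (locallyIntegrable_const _) p)]
    exact setIntegral_congr_fun (measurableSet_dyad p) fun x _ => by ring
  rw [dyadicCov, hexpand, setIntegral_dyad_eq_dLen_mul_avg f p]
  ring

lemma dyadicCov_self_nonneg (hf : IntegrableOn f (dyad p) volume)
    (hf2 : IntegrableOn (fun x => f x * f x) (dyad p) volume) : 0 ≤ dyadicCov f f p := by
  rw [dyadicCov_self_eq hf hf2 (avg f p), sub_self, zero_pow two_ne_zero, mul_zero, sub_zero]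
  exact setIntegral_nonneg (measurableSet_dyad p) fun x _ => sq_nonneg _

lemma dyadicCov_self_le (hf : IntegrableOn f (dyad p) volume)
    (hf2 : IntegrableOn (fun x => f x * f x) (dyad p) volume) (c : ℝ) :
    dyadicCov f f p ≤ ∫ x in dyad p, (f x - c) ^ 2 := by
  rw [dyadicCov_self_eq hf hf2 c]
  have := mul_nonneg (dLen_pos p).le (sq_nonneg (avg f p - c))
  linarith

lemma dyadicCov_self_eq_hc_sq_add (hf : IntegrableOn f (dyad p) volume)
    (hf2 : IntegrableOn (fun x => f x * f x) (dyad p) volume) :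
    dyadicCov f f p = hc f p ^ 2 + dyadicCov f f (dLeft p) + dyadicCov f f (dRight p) := by
  have hlen := dLen_pos p
  simp only [dyadicCov, avg]
  rw [hc_eq_setIntegral_sub hf, setIntegral_dyad_eq_add hf, setIntegral_dyad_eq_add hf2,
    dLen_dLeft, dLen_dRight, mul_pow, inv_pow, Real.sq_sqrt hlen.le]
  field_simp
  ring

lemma dyadicCov_self_eq_sum_add (hf : LocallyIntegrable f volume)
    (hf2 : LocallyIntegrable (fun x => f x * f x) volume) (m : ℕ) (p : ℤ × ℤ) :
    dyadicCov f f p = ∑ i ∈ Finset.range m, ∑ q ∈ descendants i p, hc f q ^ 2 +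
      ∑ q ∈ descendants m p, dyadicCov f f q := by
  induction m generalizing p with
  | zero => simp [descendants]
  | succ m ih =>
    rw [dyadicCov_self_eq_hc_sq_add (integrableOn_dyad hf p) (integrableOn_dyad hf2 p),
      ih (dLeft p), ih (dRight p), Finset.sum_range_succ', sum_descendants_succ]
    simp only [sum_descendants_succ, Finset.sum_add_distrib, descendants_zero, Finset.sum_singleton]
    ring

end Variance

lemma sum_descendants_dyadicCov_self_le {f φ : ℝ → ℝ} (hf : MemLp f 2 volume)
    (hφ : MemLp φ 2 volume) {m : ℕ} {p : ℤ × ℤ} {δ : ℝ}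
    (hosc : ∀ q ∈ descendants m p, ∀ x ∈ dyad q, |φ x - φ (q.2 * dLen q)| ≤ δ) :
    ∑ q ∈ descendants m p, dyadicCov f f q ≤
      2 * (∫ x in dyad p, (f x - φ x) ^ 2) + 2 * (δ ^ 2 * dLen p) := by
  have hf1 := hf.locallyIntegrable one_le_two
  have hf2 : LocallyIntegrable (fun x => f x * f x) volume :=
    (hf.integrable_mul hf).locallyIntegrable
  have hsq := (hf.sub hφ).integrable_sq.const_mul 2
  have hbound : LocallyIntegrable (fun x => 2 * (f x - φ x) ^ 2 + 2 * δ ^ 2) volume :=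
    hsq.locallyIntegrable.add (locallyIntegrable_const _)
  have hpointwise : ∀ q ∈ descendants m p, ∀ x ∈ dyad q,
      (f x - φ (q.2 * dLen q)) ^ 2 ≤ 2 * (f x - φ x) ^ 2 + 2 * δ ^ 2 := by
    intro q hq x hx
    have h := abs_le.1 (hosc q hq x hx)
    have : (φ x - φ (q.2 * dLen q)) ^ 2 ≤ δ ^ 2 := sq_le_sq' h.1 h.2
    nlinarith [sq_nonneg (f x - φ x - (φ x - φ (q.2 * dLen q)))]
  calc ∑ q ∈ descendants m p, dyadicCov f f q
      ≤ ∑ q ∈ descendants m p, ∫ x in dyad q, (f x - φ (q.2 * dLen q)) ^ 2 :=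
        Finset.sum_le_sum fun q _ =>
          dyadicCov_self_le (integrableOn_dyad hf1 q) (integrableOn_dyad hf2 q) _
    _ ≤ ∑ q ∈ descendants m p, ∫ x in dyad q, (2 * (f x - φ x) ^ 2 + 2 * δ ^ 2) :=
        Finset.sum_le_sum fun q hq => integral_mono_of_nonneg
          (Eventually.of_forall fun x => sq_nonneg _) (integrableOn_dyad hbound q)
          ((ae_restrict_iff' (measurableSet_dyad q)).2 (Eventually.of_forall (hpointwise q hq)))
    _ = 2 * (∫ x in dyad p, (f x - φ x) ^ 2) + 2 * (δ ^ 2 * dLen p) := by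
        rw [sum_descendants_setIntegral hbound, integral_add (f := fun x => 2 * (f x - φ x) ^ 2)
          hsq.integrableOn (integrableOn_dyad (locallyIntegrable_const _) p),
          integral_const_mul, setIntegral_dyad_const]
        ring

lemma tendsto_sum_descendants_dyadicCov_self {f : ℝ → ℝ} (hf : MemLp f 2 volume) (p : ℤ × ℤ) :
    Tendsto (fun m => ∑ q ∈ descendants m p, dyadicCov f f q) atTop (𝓝 0) := by
  have hf1 := hf.locallyIntegrable one_le_two
  have hf2 : LocallyIntegrable (fun x => f x * f x) volume :=
    (hf.integrable_mul hf).locallyIntegrable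
  have hnonneg : ∀ m, 0 ≤ ∑ q ∈ descendants m p, dyadicCov f f q := fun m =>
    Finset.sum_nonneg fun q _ =>
      dyadicCov_self_nonneg (integrableOn_dyad hf1 q) (integrableOn_dyad hf2 q)
  refine tendsto_order.2 ⟨fun a ha => Eventually.of_forall fun m => ha.trans_le (hnonneg m),
    fun ε hε => ?_⟩
  have hlen := dLen_pos p
  rw [← ENNReal.ofReal_ofNat] at hf
  obtain ⟨φ, hφsupp, hφ, hφcont, hφmem⟩ :=
    hf.exists_hasCompactSupport_integral_rpow_sub_le two_pos (show 0 < ε / 8 by positivity)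
  simp only [Real.norm_eq_abs, Real.rpow_two, sq_abs] at hφ
  rw [ENNReal.ofReal_ofNat] at hf hφmem
  set δ := √(ε / (8 * dLen p))
  have hδ : δ ^ 2 * dLen p = ε / 8 := by
    rw [Real.sq_sqrt (by positivity)]
    field_simp
  obtain ⟨η, hη, hφη⟩ := Metric.uniformContinuous_iff.1
    (hφsupp.uniformContinuous_of_continuous hφcont) δ (by positivity)
  have hsmall : ∀ᶠ m : ℕ in atTop, dLen p / 2 ^ m < η :=
    (Tendsto.const_div_atTop (tendsto_pow_atTop_atTop_of_one_lt one_lt_two) _).eventually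
      (gt_mem_nhds hη)
  filter_upwards [hsmall] with m hm
  have hosc : ∀ q ∈ descendants m p, ∀ x ∈ dyad q, |φ x - φ (q.2 * dLen q)| ≤ δ := by
    intro q hq x hx
    have hdist : dist x (q.2 * dLen q) < η := by
      rw [Real.dist_eq]
      exact (abs_sub_lt_dLen hx (left_mem_dyad q)).trans (by rwa [dLen_of_mem_descendants hq])
    exact (hφη hdist).le
  have hφp : ∫ x in dyad p, (f x - φ x) ^ 2 ≤ ε / 8 :=
    (setIntegral_le_integral (hf.sub hφmem).integrable_sq
      (Eventually.of_forall fun x => sq_nonneg _)).trans hφ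
  linarith [sum_descendants_dyadicCov_self_le hf hφmem hosc]

lemma hasSum_hc_sq {f : ℝ → ℝ} (hf : MemLp f 2 volume) (p : ℤ × ℤ) :
    HasSum (fun q : {q : ℤ × ℤ // dyad q ⊆ dyad p} => hc f q ^ 2) (dyadicCov f f p) := by
  classical
  let T : ℕ → Finset (ℤ × ℤ) := fun n => (Finset.range n).biUnion (descendants · p)
  have hTp : ∀ n, ∀ q ∈ T n, dyad q ⊆ dyad p := fun n q hq => by
    obtain ⟨i, -, hi⟩ := Finset.mem_biUnion.1 hq
    exact dyad_subset_of_mem_descendants hi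
  have hsum : ∀ n, ∑ q ∈ (T n).subtype (fun q => dyad q ⊆ dyad p), hc f q ^ 2 =
      dyadicCov f f p - ∑ q ∈ descendants n p, dyadicCov f f q := fun n => by
    rw [Finset.sum_subtype_of_mem (fun q => hc f q ^ 2) (hTp n), Finset.sum_biUnion
      fun i _ j _ hij => Finset.disjoint_left.2 fun q hi hj => hij (by
        have := scale_of_mem_descendants hi; have := scale_of_mem_descendants hj; omega),
      dyadicCov_self_eq_sum_add (hf.locallyIntegrable one_le_two)
        (hf.integrable_mul hf).locallyIntegrable n p, add_sub_cancel_right]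
  refine hasSum_of_nonneg_of_tendsto_sum_monotone (T := fun n => (T n).subtype _)
    (fun q => sq_nonneg _) (fun m n hmn => Finset.subtype_mono
      (Finset.biUnion_subset_biUnion_of_subset_left _ (Finset.range_mono hmn)))
    (fun q => ⟨(p.1 - q.1.1).toNat + 1, Finset.mem_subtype.2 (Finset.mem_biUnion.2
      ⟨_, Finset.mem_range.2 (Nat.lt_succ_self _),
        mem_descendants_of_dyad_subset (by have := scale_le_of_dyad_subset q.2; omega) q.2⟩)⟩) ?_
  simp only [hsum]
  simpa using tendsto_const_nhds.sub (tendsto_sum_descendants_dyadicCov_self hf p)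

lemma dyadicCov_add_self_sub_dyadicCov_sub_self {f g : ℝ → ℝ} {p : ℤ × ℤ}
    (hf : IntegrableOn f (dyad p) volume) (hg : IntegrableOn g (dyad p) volume)
    (hff : IntegrableOn (fun x => f x * f x) (dyad p) volume)
    (hgg : IntegrableOn (fun x => g x * g x) (dyad p) volume)
    (hfg : IntegrableOn (fun x => f x * g x) (dyad p) volume) :
    dyadicCov (fun x => f x + g x) (fun x => f x + g x) p -
      dyadicCov (fun x => f x - g x) (fun x => f x - g x) p = 4 * dyadicCov f g p := by
  have hint : (∫ x in dyad p, (f x + g x) * (f x + g x)) - ∫ x in dyad p, (f x - g x) * (f x - g x)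
      = 4 * ∫ x in dyad p, f x * g x := by
    have hsq : ∀ s : ℝ, IntegrableOn (fun x => f x * f x + s * (f x * g x) + g x * g x) (dyad p) :=
      fun s => (hff.add (hfg.const_mul s)).add hgg
    rw [← integral_const_mul, ← integral_sub ((hsq 2).congr_fun (fun x _ => by ring)
      (measurableSet_dyad p)) ((hsq (-2)).congr_fun (fun x _ => by ring) (measurableSet_dyad p))]
    exact setIntegral_congr_fun (measurableSet_dyad p) fun x _ => by ring
  simp only [dyadicCov]
  rw [avg_add hf hg, avg_sub hf hg]
  linear_combination hint

lemma hasSum_hc_mul {f g : ℝ → ℝ} (hf : MemLp f 2 volume) (hg : MemLp g 2 volume) (p : ℤ × ℤ) :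
    HasSum (fun q : {q : ℤ × ℤ // dyad q ⊆ dyad p} => hc f q * hc g q) (dyadicCov f g p) := by
  have hf1 := hf.locallyIntegrable one_le_two
  have hg1 := hg.locallyIntegrable one_le_two
  have h := ((hasSum_hc_sq (f := fun x => f x + g x) (hf.add hg) p).sub
    (hasSum_hc_sq (f := fun x => f x - g x) (hf.sub hg) p)).div_const 4
  rw [dyadicCov_add_self_sub_dyadicCov_sub_self (integrableOn_dyad hf1 p)
    (integrableOn_dyad hg1 p) (hf.integrable_mul hf).integrableOn
    (hg.integrable_mul hg).integrableOn (hf.integrable_mul hg).integrableOn,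
    mul_div_cancel_left₀ _ four_ne_zero] at h
  refine h.congr_fun fun q => ?_
  rw [hc_add (integrableOn_dyad hf1 q) (integrableOn_dyad hg1 q),
    hc_sub (integrableOn_dyad hf1 q) (integrableOn_dyad hg1 q)]
  ring

lemma dyadicCov_dLeft_sub_dyadicCov_dRight {f g : ℝ → ℝ} {p : ℤ × ℤ}
    (hf : IntegrableOn f (dyad p) volume) (hg : IntegrableOn g (dyad p) volume)
    (hfg : IntegrableOn (fun x => f x * g x) (dyad p) volume) :
    (dyadicCov f g (dLeft p) - dyadicCov f g (dRight p)) / √(dLen p) =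
      hc (fun x => f x * g x) p - hc f p * avg g p - hc g p * avg f p := by
  have hlen := dLen_pos p
  rw [hc_eq_setIntegral_sub hfg, hc_eq_setIntegral_sub hf, hc_eq_setIntegral_sub hg]
  simp only [dyadicCov, avg]
  rw [setIntegral_dyad_eq_add hf, setIntegral_dyad_eq_add hg, dLen_dLeft, dLen_dRight]
  field_simp
  ring

lemma hasSum_mul_dsgn {G : ℤ × ℤ → ℝ} {p : ℤ × ℤ} {a b : ℝ}
    (hL : HasSum (fun q : {q : ℤ × ℤ // dyad q ⊆ dyad (dLeft p)} => G q) a)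
    (hR : HasSum (fun q : {q : ℤ × ℤ // dyad q ⊆ dyad (dRight p)} => G q) b) :
    HasSum (fun J : {q : ℤ × ℤ // dyad q ⊂ dyad p} => G J * dsgn J p) (a - b) := by
  have hunion : {q | dyad q ⊆ dyad (dLeft p)} ∪ {q | dyad q ⊆ dyad (dRight p)} =
      {q | dyad q ⊂ dyad p} := by
    ext q
    exact dyad_ssubset_iff.symm
  have h := HasSum.add_disjoint (f := fun q => G q * dsgn q p)
    (s := {q | dyad q ⊆ dyad (dLeft p)}) (t := {q | dyad q ⊆ dyad (dRight p)})
    (Set.disjoint_left.2 fun _ => not_dyad_subset_dRight_of_dyad_subset_dLeft)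
    (hL.congr_fun fun q => by rw [Function.comp_apply, dsgn, if_pos q.2, mul_one])
    (hR.neg.congr_fun fun q => by
      rw [Function.comp_apply, dsgn,
        if_neg fun hqL => not_dyad_subset_dRight_of_dyad_subset_dLeft hqL q.2, mul_neg_one])
  rw [hunion, ← sub_eq_add_neg] at h
  exact h

end DyadicHaar

open DyadicHaar

theorem statement0_general (f g : ℝ → ℝ) (hf : MemLp f 2 volume) (hg : MemLp g 2 volume)
    (p : ℤ × ℤ) :
    HasSum
      (fun J : {q : ℤ × ℤ // dyad q ⊂ dyad p} =>
        hc f J.1 * hc g J.1 * dsgn J.1 p / Real.sqrt (dLen p))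
      (hc (fun x => f x * g x) p - hc f p * avg g p - hc g p * avg f p) := by
  have h := (hasSum_mul_dsgn (G := fun q => hc f q * hc g q) (hasSum_hc_mul hf hg (dLeft p))
    (hasSum_hc_mul hf hg (dRight p))).div_const (√(dLen p))
  rwa [dyadicCov_dLeft_sub_dyadicCov_dRight
    (integrableOn_dyad (hf.locallyIntegrable one_le_two) p)
    (integrableOn_dyad (hg.locallyIntegrable one_le_two) p)
    (hf.integrable_mul hg).integrableOn] at h

/-- Product formula for Haar coefficients:
`⟨fg, h_I⟩ = Σ_{J ⊊ I} ⟨f,h_J⟩⟨g,h_J⟩ δ(J,I)/√|I| + ⟨f,h_I⟩⟨g⟩_I + ⟨g,h_I⟩⟨f⟩_I`. -/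
theorem statement0 (f g : ℝ → ℝ) (hf : MemLp f 2 volume) (hg : MemLp g 2 volume)
    (hfg : LocallyIntegrable (fun x => f x * g x) volume) (p : ℤ × ℤ) :
    HasSum
      (fun J : {q : ℤ × ℤ // dyad q ⊂ dyad p} =>
        hc f J.1 * hc g J.1 * dsgn J.1 p / Real.sqrt (dLen p))
      (hc (fun x => f x * g x) p - hc f p * avg g p - hc g p * avg f p) :=
  statement0_general f g hf hg p
end
end

section
/- Let w ∈ A₂ on ℝ. Then for every dyadic interval I: Σ_{J⊆I} (⟨w^{-1/2}, h_J⟩)² ⟨w⟩_J ≲ [w]²_{A₂} |I|, with implied constant independent of w and I. -/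
/-!
The proof is by a Bellman function instead of the weighted square function bound. For a dyadic
`J` put `u_J = ⟨w⟩_J`, `m_J = ⟨w^{-1/2}⟩_J` and `B(u, m) = 2A²(1 - 1/(u m²))`. Jensen's inequality
gives `1 ≤ u_J m_J² ≤ ⟨w⟩_J ⟨w⁻¹⟩_J ≤ A`, hence `0 ≤ B(u_J, m_J) ≤ 2A²`. Since
`⟨w^{-1/2}, h_J⟩² ⟨w⟩_J = |J| u_J ((m_{J₋} - m_{J₊}) / 2)²` and `u, m` are midpoints of their values
on the children, the elementary inequality
`u ((m₋ - m₊) / 2)² + (B(u₋, m₋) + B(u₊, m₊)) / 2 ≤ B(u, m)` (valid when `u m² ≤ A`) says that the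
`J`-term plus `|J₋| B(J₋) + |J₊| B(J₊)` is at most `|J| B(J)`. Telescoping down the dyadic tree
bounds the sum by `|I| B(I) ≤ 2A² |I|`.
-/

open MeasureTheory Set
open scoped ENNReal

noncomputable section

lemma dLen_pos (p : ℤ × ℤ) : 0 < dLen p := by
  unfold dLen; positivity

lemma dLen_dLeft (p : ℤ × ℤ) : dLen (dLeft p) = dLen p / 2 := by
  rw [dLen, dLen, dLeft, zpow_sub_one₀ two_ne_zero, div_eq_mul_inv]

lemma dLen_dRight (p : ℤ × ℤ) : dLen (dRight p) = dLen p / 2 := dLen_dLeft p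

lemma measurableSet_dyad (p : ℤ × ℤ) : MeasurableSet (dyad p) := measurableSet_Ico

lemma dyad_nonempty (p : ℤ × ℤ) : (dyad p).Nonempty :=
  nonempty_Ico.2 (mul_lt_mul_of_pos_right (lt_add_one _) (zpow_pos two_pos _))

lemma volume_dyad (p : ℤ × ℤ) : volume (dyad p) = ENNReal.ofReal (dLen p) := by
  rw [dyad, Real.volume_Ico, dLen]
  ring_nf

lemma dyad_dLeft (p : ℤ × ℤ) :
    dyad (dLeft p) = Ico ((p.2 : ℝ) * 2 ^ p.1) (p.2 * 2 ^ p.1 + dLen p / 2) := by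
  rw [dyad, dLeft, dLen, zpow_sub_one₀ two_ne_zero]
  push_cast
  ring_nf

lemma dyad_dRight (p : ℤ × ℤ) :
    dyad (dRight p) = Ico ((p.2 : ℝ) * 2 ^ p.1 + dLen p / 2) ((p.2 + 1) * 2 ^ p.1) := by
  rw [dyad, dRight, dLen, zpow_sub_one₀ two_ne_zero]
  push_cast
  ring_nf

lemma dyad_dLeft_union_dRight (p : ℤ × ℤ) : dyad (dLeft p) ∪ dyad (dRight p) = dyad p := by
  have h := dLen_pos p
  rw [dyad_dLeft, dyad_dRight, Ico_union_Ico_eq_Ico (by linarith) (by rw [dLen] at *; linarith),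
    dyad]

lemma disjoint_dyad_dLeft_dRight (p : ℤ × ℤ) : Disjoint (dyad (dLeft p)) (dyad (dRight p)) := by
  rw [dyad_dLeft, dyad_dRight]
  exact Ico_disjoint_Ico_same

lemma dLen_le_of_dyad_subset {p q : ℤ × ℤ} (h : dyad q ⊆ dyad p) : dLen q ≤ dLen p := by
  simpa [volume_dyad, ENNReal.ofReal_le_ofReal_iff (dLen_pos p).le] using
    measure_mono (μ := volume) h

lemma fst_le_of_dyad_subset {p q : ℤ × ℤ} (h : dyad q ⊆ dyad p) : q.1 ≤ p.1 :=
  (zpow_le_zpow_iff_right₀ one_lt_two).1 (dLen_le_of_dyad_subset h)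

lemma eq_of_dyad_subset_of_fst_eq {p q : ℤ × ℤ} (h : dyad q ⊆ dyad p) (hfst : q.1 = p.1) :
    q = p := by
  rw [dyad, dyad, Ico_subset_Ico_iff (nonempty_Ico.1 (dyad_nonempty q)), hfst] at h
  have h2 : (0 : ℝ) < 2 ^ p.1 := zpow_pos two_pos _
  obtain ⟨hle, hge⟩ := h
  have h1 : (p.2 : ℝ) ≤ q.2 := le_of_mul_le_mul_right hle h2
  have h3 : (q.2 : ℝ) + 1 ≤ p.2 + 1 := le_of_mul_le_mul_right hge h2
  exact Prod.ext hfst (by exact_mod_cast le_antisymm (by linarith) h1)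

lemma Ico_intCast_mul_subset_or_disjoint (k a b : ℤ) {ℓ : ℝ} (hℓ : 0 < ℓ) :
    Ico (k * ℓ) ((k + 1) * ℓ) ⊆ Ico (a * ℓ) (b * ℓ) ∨
      Disjoint (Ico (k * ℓ) ((k + 1) * ℓ)) (Ico (a * ℓ) (b * ℓ)) := by
  by_cases hk : a ≤ k ∧ k + 1 ≤ b
  · left
    exact Ico_subset_Ico (by gcongr; exact_mod_cast hk.1) (by gcongr; exact_mod_cast hk.2)
  · right
    rw [Ico_disjoint_Ico]
    rcases not_and_or.1 hk with hk | hk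
    · have : ((k + 1 : ℤ) : ℝ) ≤ a := by exact_mod_cast Int.add_one_le_of_lt (not_le.1 hk)
      push_cast at this
      exact (min_le_left _ _).trans
        ((mul_le_mul_of_nonneg_right this hℓ.le).trans (le_max_right _ _))
    · have : (b : ℝ) ≤ k := by exact_mod_cast Int.lt_add_one_iff.1 (not_le.1 hk)
      exact (min_le_right _ _).trans
        ((mul_le_mul_of_nonneg_right this hℓ.le).trans (le_max_left _ _))

lemma dyad_subset_or_disjoint {q r : ℤ × ℤ} (h : q.1 ≤ r.1) :
    dyad q ⊆ dyad r ∨ Disjoint (dyad q) (dyad r) := by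
  obtain ⟨d, hd⟩ : ∃ d : ℕ, r.1 = q.1 + d := ⟨(r.1 - q.1).toNat, by omega⟩
  have hr : dyad r =
      Ico (((r.2 * 2 ^ d : ℤ) : ℝ) * 2 ^ q.1) (((r.2 + 1) * 2 ^ d : ℤ) * 2 ^ q.1) := by
    rw [dyad, hd, zpow_add₀ two_ne_zero, zpow_natCast]
    push_cast
    ring_nf
  rw [hr]
  exact Ico_intCast_mul_subset_or_disjoint q.2 _ _ (zpow_pos two_pos _)

lemma dyad_subset_dLeft_or_dRight {p q : ℤ × ℤ} (h : dyad q ⊆ dyad p) (hlt : q.1 < p.1) :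
    dyad q ⊆ dyad (dLeft p) ∨ dyad q ⊆ dyad (dRight p) := by
  rcases dyad_subset_or_disjoint (q := q) (r := dLeft p) (by rw [dLeft]; omega) with hL | hL
  · exact Or.inl hL
  rcases dyad_subset_or_disjoint (q := q) (r := dRight p) (by rw [dRight]; omega) with hR | hR
  · exact Or.inr hR
  obtain ⟨x, hx⟩ := dyad_nonempty q
  rcases (dyad_dLeft_union_dRight p ▸ h hx : x ∈ dyad (dLeft p) ∪ dyad (dRight p)) with hx' | hx'
  · exact absurd hx' (disjoint_left.1 hL hx)
  · exact absurd hx' (disjoint_left.1 hR hx)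

lemma Finset.sum_union_le_of_nonneg {ι M : Type*} [DecidableEq ι] [AddCommMonoid M]
    [PartialOrder M] [IsOrderedAddMonoid M] {f : ι → M} (hf : ∀ i, 0 ≤ f i) (s t : Finset ι) :
    ∑ i ∈ s ∪ t, f i ≤ ∑ i ∈ s, f i + ∑ i ∈ t, f i := by
  rw [← Finset.sum_union_inter]
  exact le_add_of_nonneg_right (Finset.sum_nonneg fun i _ => hf i)

lemma sum_le_of_add_children_le {a B : ℤ × ℤ → ℝ} (ha : ∀ q, 0 ≤ a q) (hB : ∀ q, 0 ≤ B q)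
    (hstep : ∀ q, a q + B (dLeft q) + B (dRight q) ≤ B q) (p : ℤ × ℤ) (F : Finset (ℤ × ℤ))
    (hF : ∀ q ∈ F, dyad q ⊆ dyad p) : ∑ q ∈ F, a q ≤ B p := by
  classical
  suffices key : ∀ n : ℕ, ∀ p F, (∀ q ∈ F, dyad q ⊆ dyad p ∧ p.1 < q.1 + n) →
      ∑ q ∈ F, a q ≤ B p by
    refine key (F.sup fun q => (p.1 - q.1).toNat).succ p F fun q hq => ⟨hF q hq, ?_⟩
    have := Finset.le_sup (f := fun q => (p.1 - q.1).toNat) hq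
    push_cast
    omega
  intro n
  induction n with
  | zero =>
    intro p F hF
    rw [Finset.eq_empty_of_forall_notMem fun q hq =>
      (hF q hq).2.not_ge (by simpa using fst_le_of_dyad_subset (hF q hq).1)]
    exact (Finset.sum_empty).trans_le (hB p)
  | succ n ih =>
    intro p F hF
    set FL := F.filter fun q => dyad q ⊆ dyad (dLeft p)
    set FR := F.filter fun q => dyad q ⊆ dyad (dRight p)
    have hcover : F ⊆ {p} ∪ (FL ∪ FR) := by
      intro q hq
      obtain ⟨hsub, -⟩ := hF q hq
      rcases (fst_le_of_dyad_subset hsub).lt_or_eq with hlt | heq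
      · simpa [FL, FR, hq] using Or.inr (dyad_subset_dLeft_or_dRight hsub hlt)
      · simp [eq_of_dyad_subset_of_fst_eq hsub heq]
    have hchild : ∀ r : ℤ × ℤ, r.1 = p.1 - 1 →
        ∑ q ∈ F.filter (fun q => dyad q ⊆ dyad r), a q ≤ B r := by
      intro r hr
      refine ih r _ fun q hq => ?_
      rw [Finset.mem_filter] at hq
      have := (hF q hq.1).2
      exact ⟨hq.2, by push_cast at this; omega⟩
    calc ∑ q ∈ F, a q ≤ ∑ q ∈ {p} ∪ (FL ∪ FR), a q :=
          Finset.sum_le_sum_of_subset_of_nonneg hcover fun q _ _ => ha q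
      _ ≤ a p + (∑ q ∈ FL, a q + ∑ q ∈ FR, a q) := by
          grw [Finset.sum_union_le_of_nonneg ha, Finset.sum_union_le_of_nonneg ha,
            Finset.sum_singleton]
      _ ≤ a p + (B (dLeft p) + B (dRight p)) := by
          grw [hchild (dLeft p) rfl, hchild (dRight p) rfl]
      _ ≤ B p := by linarith [hstep p]

lemma integrableOn_dyad {f : ℝ → ℝ} (hf : LocallyIntegrable f volume) (p : ℤ × ℤ) :
    IntegrableOn f (dyad p) volume :=
  (hf.integrableOn_isCompact isCompact_Icc).mono_set Ico_subset_Icc_self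

lemma setIntegral_dyad_eq_dLen_mul_avg (f : ℝ → ℝ) (p : ℤ × ℤ) :
    ∫ x in dyad p, f x = dLen p * avg f p := by
  rw [avg, mul_inv_cancel_left₀ (dLen_pos p).ne']

lemma avg_eq_add_avg_dLeft_dRight {f : ℝ → ℝ} (hf : LocallyIntegrable f volume) (p : ℤ × ℤ) :
    avg f p = (avg f (dLeft p) + avg f (dRight p)) / 2 := by
  have h := setIntegral_union (disjoint_dyad_dLeft_dRight p) (measurableSet_dyad _)
    (integrableOn_dyad hf (dLeft p)) (integrableOn_dyad hf (dRight p))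
  rw [dyad_dLeft_union_dRight, setIntegral_dyad_eq_dLen_mul_avg, setIntegral_dyad_eq_dLen_mul_avg,
    setIntegral_dyad_eq_dLen_mul_avg, dLen_dLeft, dLen_dRight] at h
  apply mul_left_cancel₀ (dLen_pos p).ne'
  linear_combination h

lemma avg_mono {f g : ℝ → ℝ} (hf : LocallyIntegrable f volume) (hg : LocallyIntegrable g volume)
    (hfg : f ≤ g) (p : ℤ × ℤ) : avg f p ≤ avg g p :=
  mul_le_mul_of_nonneg_left (setIntegral_mono (integrableOn_dyad hf p) (integrableOn_dyad hg p) hfg)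
    (inv_nonneg.2 (dLen_pos p).le)

lemma avg_add {f g : ℝ → ℝ} (hf : LocallyIntegrable f volume) (hg : LocallyIntegrable g volume)
    (p : ℤ × ℤ) : avg (fun x => f x + g x) p = avg f p + avg g p := by
  rw [avg, integral_add (integrableOn_dyad hf p) (integrableOn_dyad hg p), mul_add, avg, avg]

lemma avg_const_mul (c : ℝ) (f : ℝ → ℝ) (p : ℤ × ℤ) :
    avg (fun x => c * f x) p = c * avg f p := by
  rw [avg, integral_const_mul, avg, mul_left_comm]

lemma avg_const (c : ℝ) (p : ℤ × ℤ) : avg (fun _ => c) p = c := by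
  rw [avg, setIntegral_const, measureReal_def, volume_dyad,
    ENNReal.toReal_ofReal (dLen_pos p).le, smul_eq_mul, inv_mul_cancel_left₀ (dLen_pos p).ne']

lemma avg_pos {f : ℝ → ℝ} (hf : ∀ x, 0 < f x) (hfi : LocallyIntegrable f volume) (p : ℤ × ℤ) :
    0 < avg f p := by
  refine mul_pos (inv_pos.2 (dLen_pos p)) ?_
  rw [setIntegral_pos_iff_support_of_nonneg_ae (.of_forall fun x => (hf x).le)
    (integrableOn_dyad hfi p), Function.support_eq_univ fun x => (hf x).ne', univ_inter,
    volume_dyad]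
  exact ENNReal.ofReal_pos.2 (dLen_pos p)

lemma hc_eq {f : ℝ → ℝ} (hf : LocallyIntegrable f volume) (p : ℤ × ℤ) :
    hc f p = (√(dLen p))⁻¹ * ((∫ x in dyad (dLeft p), f x) - ∫ x in dyad (dRight p), f x) := by
  have hind : ∀ (s : Set ℝ) x, f x * s.indicator (fun _ => (1 : ℝ)) x = s.indicator f x :=
    fun s x => by simp [← indicator_mul_right]
  have hint : ∀ q, Integrable ((dyad q).indicator f) :=
    fun q => (integrable_indicator_iff (measurableSet_dyad q)).2 (integrableOn_dyad hf q)
  simp only [hc, haarF, mul_left_comm (f _), mul_sub, hind]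
  rw [integral_sub ((hint _).const_mul _) ((hint _).const_mul _), integral_const_mul,
    integral_const_mul, integral_indicator (measurableSet_dyad _),
    integral_indicator (measurableSet_dyad _)]

lemma hc_sq {f : ℝ → ℝ} (hf : LocallyIntegrable f volume) (p : ℤ × ℤ) :
    hc f p ^ 2 = dLen p * ((avg f (dLeft p) - avg f (dRight p)) / 2) ^ 2 := by
  rw [hc_eq hf, setIntegral_dyad_eq_dLen_mul_avg, setIntegral_dyad_eq_dLen_mul_avg, dLen_dLeft,
    dLen_dRight, mul_pow, inv_pow, Real.sq_sqrt (dLen_pos p).le]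
  have := (dLen_pos p).ne'
  field_simp

lemma locallyIntegrable_sqrt {X : Type*} [MeasurableSpace X] [TopologicalSpace X]
    [SecondCountableTopology X] {μ : Measure X} [IsLocallyFiniteMeasure μ] {v : X → ℝ}
    (hv : LocallyIntegrable v μ) : LocallyIntegrable (fun x => √(v x)) μ := by
  refine ((locallyIntegrable_const 1).add hv).mono
    (hv.aestronglyMeasurable.aemeasurable.sqrt.aestronglyMeasurable) (.of_forall fun x => ?_)
  simp only [Pi.add_apply, Real.norm_eq_abs, abs_of_nonneg (Real.sqrt_nonneg _)]
  rcases le_total 0 (v x) with h | h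
  · nlinarith [Real.sq_sqrt h, Real.sqrt_nonneg (v x), le_abs_self (1 + v x)]
  · rw [Real.sqrt_eq_zero'.2 h]
    exact abs_nonneg _

lemma MeasureTheory.LocallyIntegrable.const_mul {X : Type*} [MeasurableSpace X]
    [TopologicalSpace X] {μ : Measure X} {f : X → ℝ} (hf : LocallyIntegrable f μ) (c : ℝ) :
    LocallyIntegrable (fun x => c * f x) μ :=
  hf.smul c

lemma sq_avg_le_avg_sq {f : ℝ → ℝ} (hf : LocallyIntegrable f volume)
    (hf2 : LocallyIntegrable (fun x => f x ^ 2) volume) (p : ℤ × ℤ) :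
    avg f p ^ 2 ≤ avg (fun x => f x ^ 2) p := by
  set m := avg f p
  have h := avg_mono (f := fun x => 2 * m * f x) (g := fun x => f x ^ 2 + m ^ 2) (hf.const_mul _)
    (hf2.add (locallyIntegrable_const _)) (fun x => by nlinarith [sq_nonneg (f x - m)]) p
  rw [avg_const_mul, avg_add hf2 (locallyIntegrable_const _), avg_const] at h
  linarith

-- the tangent line at `t = r⁻²` of the convex function `t ↦ t ^ (-1/2)`, with `s = t ^ (-1/2)`
lemma three_mul_le_two_mul_add_pow_three_mul {r s t : ℝ} (hs : 0 < s) (hr : 0 ≤ r)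
    (hts : t * s ^ 2 = 1) : 3 * r ≤ 2 * s + r ^ 3 * t := by
  have key : 0 ≤ (s - r) ^ 2 * (2 * s + r) := by positivity
  have h : 3 * r * s ^ 2 ≤ (2 * s + r ^ 3 * t) * s ^ 2 := by
    linear_combination key - r ^ 3 * hts
  exact le_of_mul_le_mul_right h (by positivity)

section Weight

variable {w : ℝ → ℝ}

lemma locallyIntegrable_inv_sqrt (hsi : LocallyIntegrable (fun x => (w x)⁻¹) volume) :
    LocallyIntegrable (fun x => (√(w x))⁻¹) volume := by
  simpa only [Real.sqrt_inv] using locallyIntegrable_sqrt hsi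

lemma sq_avg_inv_sqrt_le (hw : ∀ x, 0 < w x)
    (hsi : LocallyIntegrable (fun x => (w x)⁻¹) volume) (p : ℤ × ℤ) :
    avg (fun x => (√(w x))⁻¹) p ^ 2 ≤ avg (fun x => (w x)⁻¹) p := by
  have hsq : (fun x => ((√(w x))⁻¹) ^ 2) = fun x => (w x)⁻¹ :=
    funext fun x => by rw [inv_pow, Real.sq_sqrt (hw x).le]
  simpa only [hsq] using sq_avg_le_avg_sq (locallyIntegrable_inv_sqrt hsi) (hsq ▸ hsi) p

lemma one_le_avg_mul_sq_avg_inv_sqrt (hw : ∀ x, 0 < w x) (hwi : LocallyIntegrable w volume)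
    (hgi : LocallyIntegrable (fun x => (√(w x))⁻¹) volume) (p : ℤ × ℤ) :
    1 ≤ avg w p * avg (fun x => (√(w x))⁻¹) p ^ 2 := by
  set u := avg w p
  set m := avg (fun x => (√(w x))⁻¹) p
  have hu := avg_pos hw hwi p
  set r := (√u)⁻¹
  have hr : 0 < r := inv_pos.2 (Real.sqrt_pos.2 hu)
  have hru : r ^ 2 * u = 1 := by
    rw [inv_pow, Real.sq_sqrt hu.le, inv_mul_cancel₀ hu.ne']
  have h := avg_mono (g := fun x => 2 * (√(w x))⁻¹ + r ^ 3 * w x) (locallyIntegrable_const _)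
    ((hgi.const_mul 2).add (hwi.const_mul _)) (fun x => three_mul_le_two_mul_add_pow_three_mul
      (inv_pos.2 (Real.sqrt_pos.2 (hw x))) hr.le
      (by rw [inv_pow, Real.sq_sqrt (hw x).le, mul_inv_cancel₀ (hw x).ne'])) p
  rw [avg_const, avg_add (hgi.const_mul 2) (hwi.const_mul _), avg_const_mul, avg_const_mul] at h
  have hrm : r ≤ m := by nlinarith
  nlinarith [mul_le_mul hrm hrm hr.le (hr.le.trans hrm)]

end Weight

def bellman (A u m : ℝ) : ℝ := 2 * A ^ 2 * (1 - (u * m ^ 2)⁻¹)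

lemma bellman_nonneg {A u m : ℝ} (h : 1 ≤ u * m ^ 2) : 0 ≤ bellman A u m :=
  mul_nonneg (by positivity) (sub_nonneg.2 (inv_le_one_of_one_le₀ h))

lemma bellman_le {A u m : ℝ} (h : 0 ≤ u * m ^ 2) : bellman A u m ≤ 2 * A ^ 2 :=
  mul_le_of_le_one_right (by positivity) (sub_le_self _ (inv_nonneg.2 h))

lemma sq_sub_mul_le {uL uR mL mR : ℝ} (huL : 0 < uL) (huR : 0 < uR) (hmL : 0 < mL)
    (hmR : 0 < mR) :
    ((mL - mR) / 2) ^ 2 * (uL * mL ^ 2 * (uR * mR ^ 2)) ≤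
      ((mL + mR) / 2) ^ 2 * ((uL + uR) / 2 * ((mL + mR) / 2) ^ 2 * (uL * mL ^ 2 + uR * mR ^ 2) -
        2 * (uL * mL ^ 2 * (uR * mR ^ 2))) := by
  have hβm : ((mL - mR) / 2) ^ 2 ≤ ((mL + mR) / 2) ^ 2 := by nlinarith [mul_pos hmL hmR]
  have h3 : 0 ≤ 3 * ((mL + mR) / 2) ^ 4 - ((mL - mR) / 2) ^ 4 := by
    nlinarith [sq_nonneg ((mL - mR) / 2)]
  have hid : ((mL + mR) / 2) ^ 2 * ((uL + uR) / 2 * ((mL + mR) / 2) ^ 2 *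
        (uL * mL ^ 2 + uR * mR ^ 2) - 2 * (uL * mL ^ 2 * (uR * mR ^ 2))) -
      ((mL - mR) / 2) ^ 2 * (uL * mL ^ 2 * (uR * mR ^ 2)) =
      2 * ((mL + mR) / 2) ^ 4 *
          ((uL - uR) / 2 * ((mL + mR) / 2) + (uL + uR) / 2 * ((mL - mR) / 2)) ^ 2 +
        uL * uR * ((mL - mR) / 2) ^ 2 * (3 * ((mL + mR) / 2) ^ 4 - ((mL - mR) / 2) ^ 4) := by
    ring
  have h4 := mul_nonneg (mul_nonneg (mul_pos huL huR).le (sq_nonneg ((mL - mR) / 2))) h3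
  have h5 : 0 ≤ 2 * ((mL + mR) / 2) ^ 4 *
      ((uL - uR) / 2 * ((mL + mR) / 2) + (uL + uR) / 2 * ((mL - mR) / 2)) ^ 2 := by positivity
  linarith

lemma mul_sq_add_bellman_le_bellman {A uL uR mL mR : ℝ} (huL : 0 < uL) (huR : 0 < uR)
    (hmL : 0 < mL) (hmR : 0 < mR) (hA : (uL + uR) / 2 * ((mL + mR) / 2) ^ 2 ≤ A) :
    (uL + uR) / 2 * ((mL - mR) / 2) ^ 2 + (bellman A uL mL + bellman A uR mR) / 2 ≤
      bellman A ((uL + uR) / 2) ((mL + mR) / 2) := by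
  have hkey := sq_sub_mul_le huL huR hmL hmR
  have ha : 0 < uL * mL ^ 2 := by positivity
  have hb : 0 < uR * mR ^ 2 := by positivity
  have hm : 0 < (mL + mR) / 2 := by positivity
  have hc : 0 < (uL + uR) / 2 * ((mL + mR) / 2) ^ 2 := by positivity
  simp only [bellman]
  set u := (uL + uR) / 2
  set m := (mL + mR) / 2
  set β := (mL - mR) / 2
  set a := uL * mL ^ 2
  set b := uR * mR ^ 2
  set c := u * m ^ 2 with hc_def
  set D := c * (a + b) - 2 * (a * b) with hD_def
  clear_value u m β a b c D
  have hD : 0 ≤ D := (mul_nonneg_iff_of_pos_left (by positivity)).1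
    ((by positivity : (0 : ℝ) ≤ β ^ 2 * (a * b)).trans hkey)
  have hgap : 2 * A ^ 2 * (1 - c⁻¹) - (2 * A ^ 2 * (1 - a⁻¹) + 2 * A ^ 2 * (1 - b⁻¹)) / 2 =
      A ^ 2 * D / (a * b * c) := by
    rw [hD_def]
    field_simp
    ring
  have h1 : u * β ^ 2 ≤ c ^ 2 * D / (a * b * c) := by
    rw [le_div_iff₀ (by positivity)]
    calc u * β ^ 2 * (a * b * c) = u ^ 2 * m ^ 2 * (β ^ 2 * (a * b)) := by rw [hc_def]; ring
      _ ≤ u ^ 2 * m ^ 2 * (m ^ 2 * D) := by gcongr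
      _ = c ^ 2 * D := by rw [hc_def]; ring
  have h2 : c ^ 2 * D / (a * b * c) ≤ A ^ 2 * D / (a * b * c) := by
    gcongr
  linarith

lemma hc_sq_mul_avg_add_bellman_le {w f : ℝ → ℝ} (hw : ∀ x, 0 < w x) (hf : ∀ x, 0 < f x)
    (hwi : LocallyIntegrable w volume) (hfi : LocallyIntegrable f volume) {A : ℝ} (q : ℤ × ℤ)
    (hA : avg w q * avg f q ^ 2 ≤ A) :
    hc f q ^ 2 * avg w q + dLen (dLeft q) * bellman A (avg w (dLeft q)) (avg f (dLeft q)) +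
        dLen (dRight q) * bellman A (avg w (dRight q)) (avg f (dRight q)) ≤
      dLen q * bellman A (avg w q) (avg f q) := by
  rw [hc_sq hfi, dLen_dLeft, dLen_dRight]
  rw [avg_eq_add_avg_dLeft_dRight hwi q, avg_eq_add_avg_dLeft_dRight hfi q] at hA ⊢
  have h := mul_sq_add_bellman_le_bellman (avg_pos hw hwi (dLeft q)) (avg_pos hw hwi (dRight q))
    (avg_pos hf hfi (dLeft q)) (avg_pos hf hfi (dRight q)) hA
  calc _ = dLen q * ((avg w (dLeft q) + avg w (dRight q)) / 2 *
          ((avg f (dLeft q) - avg f (dRight q)) / 2) ^ 2 +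
        (bellman A (avg w (dLeft q)) (avg f (dLeft q)) +
          bellman A (avg w (dRight q)) (avg f (dRight q))) / 2) := by ring
    _ ≤ _ := mul_le_mul_of_nonneg_left h (dLen_pos q).le

/-- `Σ_{J⊆I} ⟨w^{-1/2},h_J⟩² ⟨w⟩_J ≲ [w]²_{A₂} |I|`. -/
theorem statement6 :
    ∃ C : ℝ, 0 < C ∧ ∀ (w : ℝ → ℝ), (∀ x, 0 < w x) →
      LocallyIntegrable w volume → LocallyIntegrable (fun x => (w x)⁻¹) volume →
      ∀ A : ℝ, (∀ p : ℤ × ℤ, avg w p * avg (fun x => (w x)⁻¹) p ≤ A) →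
      ∀ p : ℤ × ℤ, ∀ F : Finset (ℤ × ℤ), (∀ q ∈ F, dyad q ⊆ dyad p) →
        ∑ q ∈ F, (hc (fun x => (Real.sqrt (w x))⁻¹) q) ^ 2 * avg w q ≤
          C * A ^ 2 * dLen p := by
  refine ⟨2, two_pos, fun w hw hwi hsi A hA p F hF => ?_⟩
  have hg : ∀ x, 0 < (√(w x))⁻¹ := fun x => inv_pos.2 (Real.sqrt_pos.2 (hw x))
  have hgi := locallyIntegrable_inv_sqrt hsi
  have hc1 := one_le_avg_mul_sq_avg_inv_sqrt hw hwi hgi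
  have hcA : ∀ q, avg w q * avg (fun x => (√(w x))⁻¹) q ^ 2 ≤ A := fun q =>
    (mul_le_mul_of_nonneg_left (sq_avg_inv_sqrt_le hw hsi q) (avg_pos hw hwi q).le).trans (hA q)
  calc _ ≤ dLen p * bellman A (avg w p) (avg (fun x => (√(w x))⁻¹) p) :=
        sum_le_of_add_children_le (fun q => mul_nonneg (sq_nonneg _) (avg_pos hw hwi q).le)
          (fun q => mul_nonneg (dLen_pos q).le (bellman_nonneg (hc1 q)))
          (fun q => hc_sq_mul_avg_add_bellman_le hw hg hwi hgi q (hcA q)) p F hF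
    _ ≤ 2 * A ^ 2 * dLen p := by
        rw [mul_comm]
        exact mul_le_mul_of_nonneg_right (bellman_le (zero_le_one.trans (hc1 p))) (dLen_pos p).le
end
end

section
/- Let w ∈ A₂ on ℝ. Then for every dyadic interval L: Σ_{K⊆L} (⟨w^{-1/2},h_K⟩)² ⟨w⟩_K² ≲ [w]²_{A₂} w(L) = [w]²_{A₂} ∫_L w. -/
open MeasureTheory Set
open scoped ENNReal

noncomputable section

/-!
Stop on the averages of `w`. Inside a dyadic interval `H`, the stopping children are the maximal
subintervals `C` with `⟨w⟩_C > 2⟨w⟩_H`. Every other subinterval `K` has `⟨w⟩_K ≤ 2⟨w⟩_H`, so Bessel's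
inequality for the Haar system bounds their part of the sum by
`4⟨w⟩_H² ∫_H w⁻¹ ≤ 4[w]_{A₂} w(H)`. The children cover at most half of `H`, and by Cauchy–Schwarz
and the `A₂` condition the uncovered half carries at least `w(H)/(4[w]_{A₂})`; hence
`4[w]_{A₂} Σ_C w(C) ≤ (4[w]_{A₂} - 1) w(H)`, which is exactly what an induction down the stopping
tree needs to close with the constant `16 [w]²_{A₂}`.
-/

section L2

variable {α : Type*} [MeasurableSpace α] {μ : Measure α}

lemma MeasureTheory.MemLp.inner_toLp {f g : α → ℝ} (hf : MemLp f 2 μ) (hg : MemLp g 2 μ) :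
    inner ℝ (hf.toLp f) (hg.toLp g) = ∫ x, f x * g x ∂μ := by
  rw [L2.inner_def]
  refine integral_congr_ae ?_
  filter_upwards [hf.coeFn_toLp, hg.coeFn_toLp] with x hfx hgx
  rw [hfx, hgx, RCLike.inner_apply', conj_trivial]

lemma MeasureTheory.Integrable.memLp_two_sqrt {g : α → ℝ} (hg : Integrable g μ)
    (h0 : ∀ x, 0 ≤ g x) : MemLp (fun x => √(g x)) 2 μ := by
  refine (memLp_two_iff_integrable_sq
    (Real.continuous_sqrt.comp_aestronglyMeasurable hg.aestronglyMeasurable)).2 ?_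
  simpa only [Real.sq_sqrt (h0 _)] using hg

lemma sq_measureReal_univ_le_integral_mul_integral_inv {w : α → ℝ} (hw : ∀ x, 0 < w x)
    (hwi : Integrable w μ) (hsi : Integrable (fun x => (w x)⁻¹) μ) :
    μ.real univ ^ 2 ≤ (∫ x, w x ∂μ) * ∫ x, (w x)⁻¹ ∂μ := by
  have hu := hwi.memLp_two_sqrt fun x => (hw x).le
  have hv := hsi.memLp_two_sqrt fun x => inv_nonneg.2 (hw x).le
  have h := real_inner_mul_inner_self_le (hu.toLp _) (hv.toLp _)
  simp only [MemLp.inner_toLp, ← Real.sqrt_mul (hw _).le, mul_inv_cancel₀ (hw _).ne',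
    Real.sqrt_one, Real.sqrt_mul_self (hw _).le,
    Real.mul_self_sqrt (inv_nonneg.2 (hw _).le), integral_const, smul_eq_mul, mul_one] at h
  rwa [sq]

end L2

namespace DyadicInterval

lemma dLen_pos (p : ℤ × ℤ) : 0 < dLen p := zpow_pos two_pos p.1

lemma mem_dyad_iff {p : ℤ × ℤ} {x : ℝ} : x ∈ dyad p ↔ ⌊x / 2 ^ p.1⌋ = p.2 := by
  have h : (0 : ℝ) < 2 ^ p.1 := zpow_pos two_pos p.1
  rw [Int.floor_eq_iff, le_div_iff₀ h, div_lt_iff₀ h]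
  rfl

lemma floor_div_two_zpow_of_le {m n : ℤ} (h : m ≤ n) (x : ℝ) :
    ⌊x / 2 ^ n⌋ = ⌊x / 2 ^ m⌋ / 2 ^ (n - m).toNat := by
  have hpow : (2 : ℝ) ^ n = 2 ^ m * ((2 ^ (n - m).toNat : ℕ) : ℝ) := by
    rw [Nat.cast_pow, Nat.cast_ofNat, ← zpow_natCast, Int.toNat_of_nonneg (by omega),
      ← zpow_add₀ two_ne_zero, add_sub_cancel]
  rw [hpow, ← div_div, Int.floor_div_natCast, Nat.cast_pow, Nat.cast_ofNat]

lemma dyad_left_union_right (p : ℤ × ℤ) : dyad (dLeft p) ∪ dyad (dRight p) = dyad p := by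
  ext x
  have h := floor_div_two_zpow_of_le (show p.1 - 1 ≤ p.1 by omega) x
  rw [show (p.1 - (p.1 - 1)).toNat = 1 by omega, pow_one] at h
  simp only [mem_union, mem_dyad_iff, dLeft, dRight, h]
  omega

lemma disjoint_dyad_left_right (p : ℤ × ℤ) : Disjoint (dyad (dLeft p)) (dyad (dRight p)) := by
  refine Set.disjoint_left.2 fun x hl hr => ?_
  rw [mem_dyad_iff] at hl hr
  simp only [dLeft, dRight] at hl hr
  omega

lemma nonempty_dyad (p : ℤ × ℤ) : (dyad p).Nonempty :=
  ⟨p.2 * 2 ^ p.1, le_rfl, mul_lt_mul_of_pos_right (lt_add_one _) (dLen_pos p)⟩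

lemma measurableSet_dyad (p : ℤ × ℤ) : MeasurableSet (dyad p) := measurableSet_Ico

lemma volume_dyad (p : ℤ × ℤ) : volume (dyad p) = ENNReal.ofReal (dLen p) := by
  rw [dyad, Real.volume_Ico, dLen]
  ring_nf

lemma volume_dyad_lt_top (p : ℤ × ℤ) : volume (dyad p) < ∞ := by
  simp [volume_dyad]

lemma measureReal_dyad (p : ℤ × ℤ) : volume.real (dyad p) = dLen p := by
  rw [measureReal_def, volume_dyad, ENNReal.toReal_ofReal (dLen_pos p).le]

lemma dyad_subset_or_disjoint {p q : ℤ × ℤ} (h : q.1 ≤ p.1) :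
    dyad q ⊆ dyad p ∨ Disjoint (dyad q) (dyad p) := by
  refine or_iff_not_imp_right.2 fun hpq y hy => ?_
  obtain ⟨x, hxq, hxp⟩ := Set.not_disjoint_iff.1 hpq
  rw [mem_dyad_iff] at hxq hxp hy ⊢
  rw [floor_div_two_zpow_of_le h, hy, ← hxq, ← floor_div_two_zpow_of_le h, hxp]

lemma dyad_subset_or_subset_or_disjoint (p q : ℤ × ℤ) :
    dyad p ⊆ dyad q ∨ dyad q ⊆ dyad p ∨ Disjoint (dyad p) (dyad q) := by
  rcases le_total p.1 q.1 with h | h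
  · exact (dyad_subset_or_disjoint h).imp_right Or.inr
  · exact Or.inr ((dyad_subset_or_disjoint h).imp_right fun hd => hd.symm)

lemma eq_of_scale_eq_of_not_disjoint {p q : ℤ × ℤ} (h : p.1 = q.1)
    (hpq : ¬ Disjoint (dyad p) (dyad q)) : p = q := by
  obtain ⟨x, hxp, hxq⟩ := Set.not_disjoint_iff.1 hpq
  rw [mem_dyad_iff] at hxp hxq
  exact Prod.ext h (by rw [← hxp, ← hxq, h])

lemma scale_le_of_dyad_subset {p q : ℤ × ℤ} (h : dyad q ⊆ dyad p) : q.1 ≤ p.1 := by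
  have := measure_mono (μ := volume) h
  rw [volume_dyad, volume_dyad, ENNReal.ofReal_le_ofReal_iff (dLen_pos p).le] at this
  exact (zpow_le_zpow_iff_right₀ one_lt_two).1 this

lemma dyad_injective : Function.Injective dyad := fun p q h =>
  eq_of_scale_eq_of_not_disjoint
    (le_antisymm (scale_le_of_dyad_subset h.le) (scale_le_of_dyad_subset h.ge))
    (by rw [h, disjoint_self]; exact (nonempty_dyad q).ne_empty)

lemma scale_lt_of_dyad_ssubset {p q : ℤ × ℤ} (h : dyad q ⊆ dyad p) (hne : q ≠ p) :
    q.1 < p.1 := by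
  refine (scale_le_of_dyad_subset h).lt_of_ne fun hs => hne ?_
  refine eq_of_scale_eq_of_not_disjoint hs fun hd => ?_
  exact (nonempty_dyad q).ne_empty (hd.eq_bot_of_le h)

lemma dyad_subset_left_or_right {p q : ℤ × ℤ} (h : dyad q ⊆ dyad p) (hne : q ≠ p) :
    dyad q ⊆ dyad (dLeft p) ∨ dyad q ⊆ dyad (dRight p) := by
  have hs : q.1 ≤ (dLeft p).1 := by have := scale_lt_of_dyad_ssubset h hne; simp [dLeft]; omega
  refine (dyad_subset_or_disjoint hs).imp_right fun hd => ?_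
  rw [← dyad_left_union_right p] at h
  exact fun x hx => (h hx).resolve_left (Set.disjoint_left.1 hd hx)

lemma haarF_of_notMem {p : ℤ × ℤ} {x : ℝ} (hx : x ∉ dyad p) : haarF p x = 0 := by
  rw [← dyad_left_union_right, mem_union, not_or] at hx
  simp [haarF, indicator_of_notMem hx.1, indicator_of_notMem hx.2]

lemma haarF_of_mem_left {p : ℤ × ℤ} {x : ℝ} (hx : x ∈ dyad (dLeft p)) :
    haarF p x = (Real.sqrt (dLen p))⁻¹ := by
  simp [haarF, indicator_of_mem hx,
    indicator_of_notMem (Set.disjoint_left.1 (disjoint_dyad_left_right p) hx)]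

lemma haarF_of_mem_right {p : ℤ × ℤ} {x : ℝ} (hx : x ∈ dyad (dRight p)) :
    haarF p x = -(Real.sqrt (dLen p))⁻¹ := by
  simp [haarF, indicator_of_mem hx,
    indicator_of_notMem (Set.disjoint_right.1 (disjoint_dyad_left_right p) hx)]

lemma haarF_mul_self (p : ℤ × ℤ) (x : ℝ) :
    haarF p x * haarF p x = (dyad p).indicator (fun _ => (dLen p)⁻¹) x := by
  have hsq : (Real.sqrt (dLen p))⁻¹ * (Real.sqrt (dLen p))⁻¹ = (dLen p)⁻¹ := by
    rw [← mul_inv, Real.mul_self_sqrt (dLen_pos p).le]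
  by_cases hx : x ∈ dyad p
  · rw [indicator_of_mem hx]
    rcases (dyad_left_union_right p).symm ▸ hx with h | h
    · rw [haarF_of_mem_left h, hsq]
    · rw [haarF_of_mem_right h, neg_mul_neg, hsq]
  · rw [indicator_of_notMem hx, haarF_of_notMem hx, zero_mul]

lemma memLp_haarF (p : ℤ × ℤ) (r : ℝ≥0∞) : MemLp (haarF p) r volume := by
  have hind (q : ℤ × ℤ) : MemLp ((dyad q).indicator fun _ => (1 : ℝ)) r volume :=
    memLp_indicator_const r (measurableSet_dyad q) 1 (Or.inr (volume_dyad_lt_top q).ne)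
  exact ((hind _).sub (hind _)).const_mul _

lemma integral_haarF (p : ℤ × ℤ) : ∫ x, haarF p x = 0 := by
  have hint (q : ℤ × ℤ) : Integrable ((dyad q).indicator fun _ => (1 : ℝ)) :=
    memLp_one_iff_integrable.1
      (memLp_indicator_const 1 (measurableSet_dyad q) 1 (Or.inr (volume_dyad_lt_top q).ne))
  simp only [haarF]
  rw [integral_const_mul, integral_sub (hint _) (hint _),
    integral_indicator_const _ (measurableSet_dyad _),
    integral_indicator_const _ (measurableSet_dyad _), measureReal_dyad, measureReal_dyad]
  simp [dLen, dLeft, dRight]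

lemma integral_haarF_mul_self (p : ℤ × ℤ) : ∫ x, haarF p x * haarF p x = 1 := by
  simp only [haarF_mul_self]
  rw [integral_indicator_const _ (measurableSet_dyad p), measureReal_dyad, smul_eq_mul,
    mul_inv_cancel₀ (dLen_pos p).ne']

lemma exists_haarF_eq_on {p q : ℤ × ℤ} (hne : q ≠ p) (h : q.1 ≤ p.1) :
    ∃ c, ∀ x ∈ dyad q, haarF p x = c := by
  rcases dyad_subset_or_disjoint h with hsub | hdisj
  · rcases dyad_subset_left_or_right hsub hne with hl | hr
    · exact ⟨_, fun x hx => haarF_of_mem_left (hl hx)⟩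
    · exact ⟨_, fun x hx => haarF_of_mem_right (hr hx)⟩
  · exact ⟨0, fun x hx => haarF_of_notMem (Set.disjoint_left.1 hdisj hx)⟩

lemma integral_haarF_mul_haarF_of_scale_le {p q : ℤ × ℤ} (hne : q ≠ p) (h : q.1 ≤ p.1) :
    ∫ x, haarF q x * haarF p x = 0 := by
  obtain ⟨c, hc⟩ := exists_haarF_eq_on hne h
  have hmul : ∀ x, haarF q x * haarF p x = haarF q x * c := fun x => by
    by_cases hx : x ∈ dyad q
    · rw [hc x hx]
    · rw [haarF_of_notMem hx, zero_mul, zero_mul]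
  simp only [hmul, integral_mul_const, integral_haarF, zero_mul]

lemma integral_haarF_mul_haarF {p q : ℤ × ℤ} (hne : q ≠ p) :
    ∫ x, haarF q x * haarF p x = 0 := by
  rcases le_total q.1 p.1 with h | h
  · exact integral_haarF_mul_haarF_of_scale_le hne h
  · simp only [mul_comm (haarF q _)]
    exact integral_haarF_mul_haarF_of_scale_le hne.symm h

lemma orthonormal_haarF :
    Orthonormal ℝ fun p : ℤ × ℤ => (memLp_haarF p 2).toLp (haarF p) := by
  classical
  rw [orthonormal_iff_ite]
  intro q p
  rw [MemLp.inner_toLp]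
  split_ifs with h
  · rw [h, integral_haarF_mul_self]
  · exact integral_haarF_mul_haarF h

lemma sum_hc_sq_le {f : ℝ → ℝ} (hf : MemLp f 2 volume) (s : Finset (ℤ × ℤ)) :
    ∑ q ∈ s, hc f q ^ 2 ≤ ∫ x, f x ^ 2 := by
  have h := orthonormal_haarF.sum_inner_products_le (hf.toLp f) (s := s)
  simp only [MemLp.inner_toLp, ← real_inner_self_eq_norm_sq, Real.norm_eq_abs, sq_abs] at h
  simpa only [hc, mul_comm (f _), sq] using h

lemma integrableOn_dyad {g : ℝ → ℝ} (hg : LocallyIntegrable g volume) (p : ℤ × ℤ) :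
    IntegrableOn g (dyad p) :=
  (hg.integrableOn_isCompact isCompact_Icc).mono_set Ico_subset_Icc_self

lemma setIntegral_dyad_pos {g : ℝ → ℝ} (hg0 : ∀ x, 0 < g x) (hg : LocallyIntegrable g volume)
    (p : ℤ × ℤ) : 0 < ∫ x in dyad p, g x := by
  rw [setIntegral_pos_iff_support_of_nonneg_ae (ae_of_all _ fun x => (hg0 x).le)
    (integrableOn_dyad hg p), Function.support_eq_univ fun x => (hg0 x).ne', univ_inter,
    volume_dyad, ENNReal.ofReal_pos]
  exact dLen_pos p

lemma avg_pos {g : ℝ → ℝ} (hg0 : ∀ x, 0 < g x) (hg : LocallyIntegrable g volume) (p : ℤ × ℤ) :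
    0 < avg g p :=
  mul_pos (inv_pos.2 (dLen_pos p)) (setIntegral_dyad_pos hg0 hg p)

lemma avg_mul_dLen (g : ℝ → ℝ) (p : ℤ × ℤ) : avg g p * dLen p = ∫ x in dyad p, g x := by
  rw [avg, mul_comm, ← mul_assoc, mul_inv_cancel₀ (dLen_pos p).ne', one_mul]

section Weight

variable {w : ℝ → ℝ} {A : ℝ} (hA : ∀ p : ℤ × ℤ, avg w p * avg (fun x => (w x)⁻¹) p ≤ A)
include hA

lemma setIntegral_mul_setIntegral_inv_le (p : ℤ × ℤ) :
    (∫ x in dyad p, w x) * (∫ x in dyad p, (w x)⁻¹) ≤ A * dLen p ^ 2 := by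
  have h := hA p
  rw [← avg_mul_dLen, ← avg_mul_dLen]
  nlinarith [sq_nonneg (dLen p)]

lemma pos_of_avg_mul_avg_le (hw : ∀ x, 0 < w x) (hwi : LocallyIntegrable w volume)
    (hsi : LocallyIntegrable (fun x => (w x)⁻¹) volume) : 0 < A :=
  (mul_pos (avg_pos hw hwi 0) (avg_pos (fun x => inv_pos.2 (hw x)) hsi 0)).trans_le (hA 0)

lemma avg_sq_mul_setIntegral_inv_le (hw : ∀ x, 0 < w x) (hwi : LocallyIntegrable w volume)
    (p : ℤ × ℤ) : avg w p ^ 2 * (∫ x in dyad p, (w x)⁻¹) ≤ A * ∫ x in dyad p, w x := by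
  calc avg w p ^ 2 * (∫ x in dyad p, (w x)⁻¹)
      = avg w p * (avg w p * avg (fun x => (w x)⁻¹) p) * dLen p := by
        rw [← avg_mul_dLen (fun x => (w x)⁻¹)]; ring
    _ ≤ avg w p * A * dLen p := by
        have := avg_pos hw hwi p
        have := dLen_pos p
        gcongr
        exact hA p
    _ = A * ∫ x in dyad p, w x := by rw [← avg_mul_dLen w]; ring

lemma setIntegral_dyad_le_of_half_le (hw : ∀ x, 0 < w x) (hwi : LocallyIntegrable w volume)
    (hsi : LocallyIntegrable (fun x => (w x)⁻¹) volume) {p : ℤ × ℤ} {E : Set ℝ}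
    (hE : MeasurableSet E) (hEp : E ⊆ dyad p) (hvol : dLen p / 2 ≤ volume.real E) :
    ∫ x in dyad p, w x ≤ 4 * A * ∫ x in E, w x := by
  have hcs := sq_measureReal_univ_le_integral_mul_integral_inv hw
    ((integrableOn_dyad hwi p).mono_set hEp) ((integrableOn_dyad hsi p).mono_set hEp)
  rw [measureReal_restrict_apply_univ] at hcs
  have hσ : ∫ x in E, (w x)⁻¹ ≤ ∫ x in dyad p, (w x)⁻¹ :=
    setIntegral_mono_set (integrableOn_dyad hsi p) (ae_of_all _ fun x => (inv_pos.2 (hw x)).le)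
      (ae_of_all _ hEp)
  have hwE : 0 ≤ ∫ x in E, w x := setIntegral_nonneg hE fun x _ => (hw x).le
  have hwp := setIntegral_dyad_pos hw hwi p
  have hl := dLen_pos p
  have hhalf : (dLen p / 2) ^ 2 ≤ volume.real E ^ 2 := by gcongr
  have key : dLen p ^ 2 * (∫ x in dyad p, w x) ≤ dLen p ^ 2 * (4 * A * ∫ x in E, w x) := by
    nlinarith [setIntegral_mul_setIntegral_inv_le hA p, mul_le_mul_of_nonneg_left hσ hwE,
      mul_le_mul_of_nonneg_left (hhalf.trans hcs) hwp.le]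
  exact le_of_mul_le_mul_left key (by positivity)

end Weight

lemma sum_hc_sq_le_setIntegral {f : ℝ → ℝ} {G : ℤ × ℤ}
    (hf : MemLp f 2 (volume.restrict (dyad G))) {s : Finset (ℤ × ℤ)}
    (hs : ∀ q ∈ s, dyad q ⊆ dyad G) : ∑ q ∈ s, hc f q ^ 2 ≤ ∫ x in dyad G, f x ^ 2 := by
  have hg := (memLp_indicator_iff_restrict (measurableSet_dyad G)).2 hf
  have hc_eq : ∀ q ∈ s, hc f q = hc ((dyad G).indicator f) q := fun q hq => by
    refine integral_congr_ae (ae_of_all _ fun x => ?_)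
    dsimp only
    by_cases hx : x ∈ dyad G
    · rw [indicator_of_mem hx]
    · rw [haarF_of_notMem fun hxq => hx (hs q hq hxq), mul_zero, mul_zero]
  calc ∑ q ∈ s, hc f q ^ 2 = ∑ q ∈ s, hc ((dyad G).indicator f) q ^ 2 :=
        Finset.sum_congr rfl fun q hq => by rw [hc_eq q hq]
    _ ≤ ∫ x, (dyad G).indicator f x ^ 2 := sum_hc_sq_le hg s
    _ = ∫ x in dyad G, f x ^ 2 := by
        rw [← integral_indicator (measurableSet_dyad G)]
        simp only [sq, indicator_mul]

lemma sum_hc_inv_sqrt_sq_le {w : ℝ → ℝ} (hw : ∀ x, 0 < w x)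
    (hsi : LocallyIntegrable (fun x => (w x)⁻¹) volume) {G : ℤ × ℤ} {s : Finset (ℤ × ℤ)}
    (hs : ∀ q ∈ s, dyad q ⊆ dyad G) :
    ∑ q ∈ s, hc (fun x => (√(w x))⁻¹) q ^ 2 ≤ ∫ x in dyad G, (w x)⁻¹ := by
  have hf := (integrableOn_dyad hsi G).memLp_two_sqrt fun x => inv_nonneg.2 (hw x).le
  simp only [Real.sqrt_inv] at hf
  refine (sum_hc_sq_le_setIntegral hf hs).trans_eq (setIntegral_congr_fun (measurableSet_dyad G)
    fun x _ => ?_)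
  rw [inv_pow, Real.sq_sqrt (hw x).le]

section Packing

variable {w : ℝ → ℝ} {H : ℤ × ℤ} {Ch : Finset (ℤ × ℤ)}

lemma sum_dLen_le_half (hw : ∀ x, 0 < w x) (hwi : LocallyIntegrable w volume)
    (hsub : ∀ C ∈ Ch, dyad C ⊆ dyad H) (hdisj : (Ch : Set (ℤ × ℤ)).PairwiseDisjoint dyad)
    (havg : ∀ C ∈ Ch, 2 * avg w H < avg w C) : ∑ C ∈ Ch, dLen C ≤ dLen H / 2 := by
  have hU : ∑ C ∈ Ch, ∫ x in dyad C, w x ≤ ∫ x in dyad H, w x := by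
    rw [← integral_biUnion_finset Ch (fun C _ => measurableSet_dyad C) hdisj
      (fun C _ => integrableOn_dyad hwi C)]
    exact setIntegral_mono_set (integrableOn_dyad hwi H) (ae_of_all _ fun x => (hw x).le)
      (ae_of_all _ (iUnion₂_subset hsub))
  have hsum : 2 * avg w H * ∑ C ∈ Ch, dLen C ≤ ∑ C ∈ Ch, ∫ x in dyad C, w x := by
    rw [Finset.mul_sum]
    refine Finset.sum_le_sum fun C hC => ?_
    rw [← avg_mul_dLen]
    exact mul_le_mul_of_nonneg_right (havg C hC).le (dLen_pos C).le
  have hH := avg_pos hw hwi H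
  rw [← avg_mul_dLen] at hU
  nlinarith

lemma four_mul_sum_setIntegral_le {A : ℝ}
    (hA : ∀ p : ℤ × ℤ, avg w p * avg (fun x => (w x)⁻¹) p ≤ A) (hw : ∀ x, 0 < w x)
    (hwi : LocallyIntegrable w volume) (hsi : LocallyIntegrable (fun x => (w x)⁻¹) volume)
    (hsub : ∀ C ∈ Ch, dyad C ⊆ dyad H) (hdisj : (Ch : Set (ℤ × ℤ)).PairwiseDisjoint dyad)
    (havg : ∀ C ∈ Ch, 2 * avg w H < avg w C) :
    4 * A * ∑ C ∈ Ch, ∫ x in dyad C, w x ≤ (4 * A - 1) * ∫ x in dyad H, w x := by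
  set U := ⋃ C ∈ Ch, dyad C
  have hUm : MeasurableSet U := Finset.measurableSet_biUnion _ fun C _ => measurableSet_dyad C
  have hUH : U ⊆ dyad H := iUnion₂_subset hsub
  have hwU : ∫ x in U, w x = ∑ C ∈ Ch, ∫ x in dyad C, w x :=
    integral_biUnion_finset Ch (fun C _ => measurableSet_dyad C) hdisj
      (fun C _ => integrableOn_dyad hwi C)
  have hvolU : volume.real U = ∑ C ∈ Ch, dLen C := by
    rw [measureReal_biUnion_finset hdisj (fun C _ => measurableSet_dyad C)
      (fun C _ => (volume_dyad_lt_top C).ne)]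
    exact Finset.sum_congr rfl fun C _ => measureReal_dyad C
  have hvolE : dLen H / 2 ≤ volume.real (dyad H \ U) := by
    rw [measureReal_sdiff hUH hUm (volume_dyad_lt_top H).ne, measureReal_dyad, hvolU]
    linarith [sum_dLen_le_half hw hwi hsub hdisj havg]
  have hthick := setIntegral_dyad_le_of_half_le hA hw hwi hsi
    ((measurableSet_dyad H).diff hUm) sdiff_subset hvolE
  rw [setIntegral_sdiff hUm (integrableOn_dyad hwi H) hUH, hwU] at hthick
  linarith

end Packing

lemma finite_setOf_dyad_between (F : Finset (ℤ × ℤ)) (H : ℤ × ℤ) :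
    {r : ℤ × ℤ | ∃ q ∈ F, dyad q ⊆ dyad r ∧ dyad r ⊆ dyad H}.Finite := by
  have h : {r : ℤ × ℤ | ∃ q ∈ F, dyad q ⊆ dyad r ∧ dyad r ⊆ dyad H} =
      ⋃ q ∈ F, {r | dyad q ⊆ dyad r ∧ dyad r ⊆ dyad H} := by
    ext r; simp only [mem_ofPred_eq, mem_iUnion, exists_prop]
  rw [h]
  refine F.finite_toSet.biUnion fun q _ => ?_
  refine Set.Finite.of_finite_image (f := Prod.fst) ((Set.finite_Icc q.1 H.1).subset ?_) ?_
  · rintro _ ⟨r, ⟨hqr, hrH⟩, rfl⟩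
    exact ⟨scale_le_of_dyad_subset hqr, scale_le_of_dyad_subset hrH⟩
  · rintro r ⟨hqr, -⟩ r' ⟨hqr', -⟩ hs
    obtain ⟨x, hx⟩ := nonempty_dyad q
    exact eq_of_scale_eq_of_not_disjoint hs (Set.not_disjoint_iff.2 ⟨x, hqr hx, hqr' hx⟩)

def dyadBetween (F : Finset (ℤ × ℤ)) (H : ℤ × ℤ) : Finset (ℤ × ℤ) :=
  (finite_setOf_dyad_between F H).toFinset

lemma mem_dyadBetween {F : Finset (ℤ × ℤ)} {H r : ℤ × ℤ} :
    r ∈ dyadBetween F H ↔ ∃ q ∈ F, dyad q ⊆ dyad r ∧ dyad r ⊆ dyad H :=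
  Set.Finite.mem_toFinset _

open Classical in
def stoppingCandidates (w : ℝ → ℝ) (F : Finset (ℤ × ℤ)) (H : ℤ × ℤ) : Finset (ℤ × ℤ) :=
  (dyadBetween F H).filter fun r => r ≠ H ∧ 2 * avg w H < avg w r

open Classical in
def stoppingChildren (w : ℝ → ℝ) (F : Finset (ℤ × ℤ)) (H : ℤ × ℤ) : Finset (ℤ × ℤ) :=
  (stoppingCandidates w F H).filter fun C =>
    ∀ r ∈ stoppingCandidates w F H, dyad C ⊆ dyad r → r = C

section Stopping

variable {w : ℝ → ℝ} {F : Finset (ℤ × ℤ)} {H C r : ℤ × ℤ}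

lemma mem_stoppingCandidates :
    r ∈ stoppingCandidates w F H ↔
      (∃ q ∈ F, dyad q ⊆ dyad r ∧ dyad r ⊆ dyad H) ∧ r ≠ H ∧ 2 * avg w H < avg w r := by
  simp [stoppingCandidates, mem_dyadBetween]

open Classical in
lemma mem_stoppingChildren :
    C ∈ stoppingChildren w F H ↔ C ∈ stoppingCandidates w F H ∧
      ∀ r ∈ stoppingCandidates w F H, dyad C ⊆ dyad r → r = C :=
  Finset.mem_filter

lemma dyad_subset_of_mem_stoppingChildren (hC : C ∈ stoppingChildren w F H) :
    dyad C ⊆ dyad H := by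
  obtain ⟨⟨-, -, -, hCH⟩, -⟩ := mem_stoppingCandidates.1 (mem_stoppingChildren.1 hC).1
  exact hCH

lemma two_mul_avg_lt_of_mem_stoppingChildren (hC : C ∈ stoppingChildren w F H) :
    2 * avg w H < avg w C :=
  (mem_stoppingCandidates.1 (mem_stoppingChildren.1 hC).1).2.2

lemma exists_mem_stoppingChildren_superset (hr : r ∈ stoppingCandidates w F H) :
    ∃ C ∈ stoppingChildren w F H, dyad r ⊆ dyad C := by
  classical
  obtain ⟨C, hC, hmax⟩ := ((stoppingCandidates w F H).filter (dyad r ⊆ dyad ·)).exists_maximalFor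
    dyad ⟨r, Finset.mem_filter.2 ⟨hr, subset_rfl⟩⟩
  obtain ⟨hCB, hrC⟩ := Finset.mem_filter.1 hC
  refine ⟨C, mem_stoppingChildren.2 ⟨hCB, fun r' hr' hCr' => dyad_injective ?_⟩, hrC⟩
  exact le_antisymm (hmax (Finset.mem_filter.2 ⟨hr', hrC.trans hCr'⟩) hCr') hCr'

lemma pairwiseDisjoint_stoppingChildren :
    (stoppingChildren w F H : Set (ℤ × ℤ)).PairwiseDisjoint dyad := by
  intro C hC C' hC' hne
  obtain ⟨hCB, hmax⟩ := mem_stoppingChildren.1 hC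
  obtain ⟨hCB', hmax'⟩ := mem_stoppingChildren.1 hC'
  rcases dyad_subset_or_subset_or_disjoint C C' with h | h | h
  · exact absurd (hmax C' hCB' h).symm hne
  · exact absurd (hmax' C hCB h) hne
  · exact h

lemma card_dyadBetween_lt (hC : C ∈ stoppingChildren w F H) :
    (dyadBetween F C).card < (dyadBetween F H).card := by
  obtain ⟨⟨q, hq, hqC, hCH⟩, hne, -⟩ :=
    mem_stoppingCandidates.1 (mem_stoppingChildren.1 hC).1
  refine Finset.card_lt_card ((Finset.ssubset_iff_of_subset fun r hr => ?_).2 ⟨H, ?_, ?_⟩)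
  · obtain ⟨q', hq', hqr, hrC⟩ := mem_dyadBetween.1 hr
    exact mem_dyadBetween.2 ⟨q', hq', hqr, hrC.trans hCH⟩
  · exact mem_dyadBetween.2 ⟨q, hq, hqC.trans hCH, subset_rfl⟩
  · intro hH
    obtain ⟨-, -, -, hHC⟩ := mem_dyadBetween.1 hH
    exact hne (dyad_injective (hCH.antisymm hHC))

lemma avg_le_two_mul_avg_of_not_stopped (hw : ∀ x, 0 < w x) (hwi : LocallyIntegrable w volume)
    {q : ℤ × ℤ} (hq : q ∈ F) (hqH : dyad q ⊆ dyad H)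
    (hfree : ¬ ∃ C ∈ stoppingChildren w F H, dyad q ⊆ dyad C) : avg w q ≤ 2 * avg w H := by
  by_contra! hgt
  by_cases hqH' : q = H
  · subst hqH'
    linarith [avg_pos hw hwi q]
  · exact hfree (exists_mem_stoppingChildren_superset
      (mem_stoppingCandidates.2 ⟨⟨q, hq, subset_rfl, hqH⟩, hqH', hgt⟩))

end Stopping

section Embedding

variable {w : ℝ → ℝ} {A : ℝ} (hA : ∀ p : ℤ × ℤ, avg w p * avg (fun x => (w x)⁻¹) p ≤ A)
  (hw : ∀ x, 0 < w x) (hwi : LocallyIntegrable w volume)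
  (hsi : LocallyIntegrable (fun x => (w x)⁻¹) volume)
  {a : ℤ × ℤ → ℝ} (ha0 : ∀ q, 0 ≤ a q)
  (ha : ∀ (G : ℤ × ℤ) (s : Finset (ℤ × ℤ)), (∀ q ∈ s, dyad q ⊆ dyad G) →
    ∑ q ∈ s, a q ≤ ∫ x in dyad G, (w x)⁻¹)
include hA hw hwi ha0 ha

open Classical in
lemma sum_not_stopped_le (F : Finset (ℤ × ℤ)) (H : ℤ × ℤ) :
    ∑ q ∈ F with dyad q ⊆ dyad H ∧ ¬ ∃ C ∈ stoppingChildren w F H, dyad q ⊆ dyad C,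
      a q * avg w q ^ 2 ≤ 4 * A * ∫ x in dyad H, w x := by
  set s := F.filter fun q => dyad q ⊆ dyad H ∧ ¬ ∃ C ∈ stoppingChildren w F H, dyad q ⊆ dyad C
  calc ∑ q ∈ s, a q * avg w q ^ 2 ≤ ∑ q ∈ s, a q * (2 * avg w H) ^ 2 := by
        refine Finset.sum_le_sum fun q hq => ?_
        obtain ⟨hqF, hqH, hfree⟩ := Finset.mem_filter.1 hq
        have := avg_pos hw hwi q
        gcongr
        · exact ha0 q
        · exact avg_le_two_mul_avg_of_not_stopped hw hwi hqF hqH hfree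
    _ = 4 * avg w H ^ 2 * ∑ q ∈ s, a q := by rw [← Finset.sum_mul]; ring
    _ ≤ 4 * (avg w H ^ 2 * ∫ x in dyad H, (w x)⁻¹) := by
        rw [mul_assoc]
        gcongr
        exact ha H s fun q hq => (Finset.mem_filter.1 hq).2.1
    _ ≤ 4 * A * ∫ x in dyad H, w x := by
        rw [mul_assoc]
        exact mul_le_mul_of_nonneg_left (avg_sq_mul_setIntegral_inv_le hA hw hwi H) zero_le_four

include hsi in
open Classical in
theorem sum_mul_avg_sq_le (F : Finset (ℤ × ℤ)) (H : ℤ × ℤ) :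
    ∑ q ∈ F with dyad q ⊆ dyad H, a q * avg w q ^ 2 ≤ 16 * A ^ 2 * ∫ x in dyad H, w x := by
  induction hn : (dyadBetween F H).card using Nat.strong_induction_on generalizing H with
  | _ n ih =>
  set Ch := stoppingChildren w F H
  have hstopped : ∑ q ∈ F with dyad q ⊆ dyad H ∧ ∃ C ∈ Ch, dyad q ⊆ dyad C, a q * avg w q ^ 2
      ≤ ∑ C ∈ Ch, 16 * A ^ 2 * ∫ x in dyad C, w x := by
    refine le_trans ?_ (Finset.sum_le_sum fun C hC =>
      ih _ (hn ▸ card_dyadBetween_lt hC) C rfl)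
    rw [← Finset.sum_biUnion fun C hC C' hC' hne => ?_]
    · refine Finset.sum_le_sum_of_subset_of_nonneg (fun q hq => ?_)
        fun q _ _ => mul_nonneg (ha0 q) (sq_nonneg _)
      obtain ⟨hqF, -, C, hC, hqC⟩ := Finset.mem_filter.1 hq
      exact Finset.mem_biUnion.2 ⟨C, hC, Finset.mem_filter.2 ⟨hqF, hqC⟩⟩
    · refine Finset.disjoint_filter.2 fun q _ hqC hqC' => ?_
      obtain ⟨x, hx⟩ := nonempty_dyad q
      exact Set.disjoint_left.1 (pairwiseDisjoint_stoppingChildren hC hC' hne) (hqC hx) (hqC' hx)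
  have hpack := four_mul_sum_setIntegral_le (Ch := Ch) hA hw hwi hsi
    (fun _ => dyad_subset_of_mem_stoppingChildren) pairwiseDisjoint_stoppingChildren
    (fun _ => two_mul_avg_lt_of_mem_stoppingChildren)
  have hA0 := pos_of_avg_mul_avg_le hA hw hwi hsi
  rw [← Finset.sum_filter_add_sum_filter_not _ fun q => ∃ C ∈ Ch, dyad q ⊆ dyad C,
    Finset.filter_filter, Finset.filter_filter]
  rw [← Finset.mul_sum] at hstopped
  calc _ ≤ 16 * A ^ 2 * ∑ C ∈ Ch, (∫ x in dyad C, w x) + 4 * A * ∫ x in dyad H, w x :=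
        add_le_add hstopped (sum_not_stopped_le hA hw hwi ha0 ha F H)
    _ = 4 * A * (4 * A * ∑ C ∈ Ch, ∫ x in dyad C, w x) + 4 * A * ∫ x in dyad H, w x := by ring
    _ ≤ 4 * A * ((4 * A - 1) * ∫ x in dyad H, w x) + 4 * A * ∫ x in dyad H, w x := by gcongr
    _ = 16 * A ^ 2 * ∫ x in dyad H, w x := by ring

end Embedding

end DyadicInterval

open DyadicInterval in
/-- `Σ_{K⊆L} ⟨w^{-1/2},h_K⟩² ⟨w⟩_K² ≲ [w]²_{A₂} w(L)`. -/
theorem statement12 :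
    ∃ C : ℝ, 0 < C ∧ ∀ (w : ℝ → ℝ), (∀ x, 0 < w x) →
      LocallyIntegrable w volume → LocallyIntegrable (fun x => (w x)⁻¹) volume →
      ∀ A : ℝ, (∀ p : ℤ × ℤ, avg w p * avg (fun x => (w x)⁻¹) p ≤ A) →
      ∀ p : ℤ × ℤ, ∀ F : Finset (ℤ × ℤ), (∀ q ∈ F, dyad q ⊆ dyad p) →
        ∑ q ∈ F, (hc (fun x => (Real.sqrt (w x))⁻¹) q) ^ 2 * (avg w q) ^ 2 ≤
          C * A ^ 2 * ∫ x in dyad p, w x := by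
  refine ⟨16, by norm_num, fun w hw hwi hsi A hA p F hF => ?_⟩
  classical
  have h := sum_mul_avg_sq_le hA hw hwi hsi (fun q => sq_nonneg _)
    (fun G s hs => sum_hc_inv_sqrt_sq_le hw hsi hs) F p
  rwa [Finset.filter_true_of_mem hF] at h
end
end
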